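/- arXiv:math/0701096 — 5 statements merged into one kernel-verified Lean document; each statement's English description precedes it below -/
import Mathlib

section
/- Let σ = a₁a₂⋯a_{n-1} be a permutation of {2,3,…,n}. For 0 ≤ i ≤ n-1, let σᵢ be the permutation of {1,…,n} obtained by inserting 1 into σ at position i (σ₀ places 1 at the front, and σᵢ places 1 immediately after aᵢ). Then the major indices maj(σ₀), maj(σ₁), …, maj(σ_{n-1}) are all distinct and form the set {maj(σ), maj(σ)+1, …, maj(σ)+n-1}. -/
open Finset
open scoped Classical

/-- descents of a list: number of positions i with l_i > l_{i+1} -/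
def desList (l : List ℕ) : ℕ := ((l.zip l.tail).filter (fun p => p.2 < p.1)).length

/-- major index of a list (1-based positions) -/
def majList (l : List ℕ) : ℕ :=
  ∑ i ∈ Finset.range (l.length - 1), if l.getD (i+1) 0 < l.getD i 0 then i + 1 else 0

/-- inversion number of a list -/
def invList (l : List ℕ) : ℕ :=
  ((Finset.range l.length ×ˢ Finset.range l.length).filter
    (fun p => p.1 < p.2 ∧ l.getD p.2 0 < l.getD p.1 0)).card

/-- number of 2-crossings of an arc set -/
def cr2 {α : Type*} [LinearOrder α] (A : Finset (α × α)) : ℕ :=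
  ((A ×ˢ A).filter (fun p => p.1.1 < p.2.1 ∧ p.2.1 < p.1.2 ∧ p.1.2 < p.2.2)).card

/-- the label of an arc: arcs are labeled 1,…,k from right to left by left-hand endpoints -/
def labelArc {α : Type*} [LinearOrder α] (A : Finset (α × α)) (e : α × α) : ℕ :=
  (A.filter (fun f => e.1 < f.1)).card + 1

/-- p-major index of an arc set: process endpoints in decreasing order, maintaining the
sequence σ of (arcs corresponding to) labels; at a left endpoint delete its arc, at a
right endpoint prepend the arc ending there and add the number of descents of the
label sequence σ. -/
noncomputable def pmajArcs {α : Type*} [LinearOrder α] (A : Finset (α × α)) : ℕ :=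
  (((((A.image Prod.fst) ∪ (A.image Prod.snd)).sort (· ≤ ·)).reverse).foldl
    (fun (st : List (α × α) × ℕ) i =>
      let σ₁ := st.1.filter (fun e => e.1 ≠ i)
      let ends := (A.filter (fun e => e.2 = i)).toList
      let σ₂ := ends ++ σ₁
      (σ₂, st.2 + if ends.isEmpty then 0 else desList (σ₂.map (labelArc A))))
    ([], 0)).2

/-- arcs of the standard representation of a partition of [n] = {1,…,n}:
pairs of consecutive elements of a block -/
noncomputable def arcsOf {n : ℕ} (P : Finpartition (Finset.Icc 1 n)) : Finset (ℕ × ℕ) :=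
  ((Finset.Icc 1 n) ×ˢ (Finset.Icc 1 n)).filter (fun e =>
    e.1 < e.2 ∧ ∃ B ∈ P.parts, e.1 ∈ B ∧ e.2 ∈ B ∧ ∀ k ∈ B, e.1 < k → k < e.2 → False)

/-- the set of minimal block elements of a partition of [n] -/
noncomputable def minsetOf {n : ℕ} (P : Finpartition (Finset.Icc 1 n)) : Finset ℕ :=
  (Finset.Icc 1 n).filter (fun i => ∃ B ∈ P.parts, i ∈ B ∧ ∀ j ∈ B, i ≤ j)

/-- the set of maximal block elements of a partition of [n] -/
noncomputable def maxsetOf {n : ℕ} (P : Finpartition (Finset.Icc 1 n)) : Finset ℕ :=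
  (Finset.Icc 1 n).filter (fun i => ∃ B ∈ P.parts, i ∈ B ∧ ∀ j ∈ B, j ≤ i)

noncomputable instance finpartitionFintype (s : Finset ℕ) : Fintype (Finpartition s) := by
  apply Fintype.ofInjective
    (fun P : Finpartition s =>
      (⟨P.parts, by
        simp only [Finset.mem_powerset]
        intro t ht
        exact Finset.mem_powerset.2 (P.le ht)⟩ : {t // t ∈ s.powerset.powerset}))
  intro P Q h
  have : P.parts = Q.parts := congrArg Subtype.val h
  cases P; cases Q; simpa using this

/-- P_n(S,T): partitions of [n] with block minima S and block maxima T -/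
noncomputable def pnST (n : ℕ) (S T : Finset ℕ) : Finset (Finpartition (Finset.Icc 1 n)) :=
  Finset.univ.filter (fun P => minsetOf P = S ∧ maxsetOf P = T)

/-- h(i) = |T ∩ {i+1,…,n}| − |S ∩ {i+1,…,n}| -/
def hST (n : ℕ) (S T : Finset ℕ) (i : ℕ) : ℕ :=
  (T ∩ Finset.Icc (i+1) n).card - (S ∩ Finset.Icc (i+1) n).card

/-!
Write `D` for the descent set of `σ`. Inserting `1` after `aᵢ` moves every descent at a position
`> i` one step to the right and creates a descent at `i` (as `aᵢ > 1`), which is new unless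
`i = 0` or `i ∈ D`. Hence `maj σᵢ - maj σ` is `#{d ∈ D | d > i}` when `i = 0` or `i ∈ D`, and
`i + #{d ∈ D | d > i} = #(D ∪ {1, …, i})` otherwise. Values of the first kind strictly decrease
in `i` and are at most `#D`, values of the second kind strictly increase and exceed `#D`, and all
are below `n`; so the `n` increments are exactly `0, …, n - 1`.
-/

def majShift (D : Finset ℕ) (i : ℕ) : ℕ :=
  #{j ∈ D | i ≤ j} + if i = 0 ∨ i - 1 ∈ D then 0 else i

section majShift

variable {D : Finset ℕ} {i : ℕ}

lemma majShift_eq_card_filter (h : i = 0 ∨ i - 1 ∈ D) : majShift D i = #{j ∈ D | i ≤ j} := by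
  simp [majShift, h]

lemma majShift_eq_card_union (h : ¬(i = 0 ∨ i - 1 ∈ D)) : majShift D i = #(D ∪ range i) := by
  have hsplit : D ∪ range i = {j ∈ D | i ≤ j} ∪ range i := by
    ext j; simp only [mem_union, mem_filter, mem_range]; grind
  rw [majShift, if_neg h, hsplit, card_union_of_disjoint, card_range]
  exact disjoint_left.2 fun j hj hj' => by simp at hj hj'; omega

lemma majShift_le_card (h : i = 0 ∨ i - 1 ∈ D) : majShift D i ≤ #D :=
  (majShift_eq_card_filter h).trans_le (card_filter_le _ _)

lemma card_lt_majShift (h : ¬(i = 0 ∨ i - 1 ∈ D)) : #D < majShift D i := by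
  push Not at h
  rw [majShift_eq_card_union (by tauto)]
  refine card_lt_card ((ssubset_iff_of_subset subset_union_left).2 ⟨i - 1, ?_, h.2⟩)
  exact mem_union_right _ (mem_range.2 (by omega))

lemma majShift_injective (D : Finset ℕ) : Function.Injective (majShift D) := by
  refine Function.Injective.of_lt_imp_ne fun a b hab => ?_
  by_cases ha : a = 0 ∨ a - 1 ∈ D <;> by_cases hb : b = 0 ∨ b - 1 ∈ D
  · have hb' : b - 1 ∈ D := hb.resolve_left (by omega)
    rw [majShift_eq_card_filter ha, majShift_eq_card_filter hb]
    refine (card_lt_card ((ssubset_iff_of_subset ?_).2 ⟨b - 1, ?_, ?_⟩)).ne'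
    · intro j hj; simp only [mem_filter] at hj ⊢; exact ⟨hj.1, by omega⟩
    · exact mem_filter.2 ⟨hb', by omega⟩
    · simp only [mem_filter, not_and]; omega
  · exact ((majShift_le_card ha).trans_lt (card_lt_majShift hb)).ne
  · exact ((majShift_le_card hb).trans_lt (card_lt_majShift ha)).ne'
  · push Not at hb
    rw [majShift_eq_card_union ha, majShift_eq_card_union (by tauto)]
    refine (card_lt_card ((ssubset_iff_of_subset ?_).2 ⟨b - 1, ?_, ?_⟩)).ne
    · exact union_subset_union_right (range_subset_range.2 hab.le)
    · exact mem_union_right _ (mem_range.2 (by omega))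
    · simp only [mem_union, mem_range, not_or]; exact ⟨hb.2, by omega⟩

lemma majShift_lt {n : ℕ} (hD : D ⊆ range (n - 2)) (hi : i < n) : majShift D i < n := by
  by_cases h : i = 0 ∨ i - 1 ∈ D
  · have := card_le_card hD
    rw [card_range] at this
    have := majShift_le_card h
    omega
  · rw [majShift_eq_card_union h]
    have := card_le_card (union_subset (hD.trans (range_subset_range.2 (by omega)))
      (range_subset_range.2 (Nat.le_sub_one_of_lt hi)))
    rw [card_range] at this
    omega

lemma image_majShift_range {n : ℕ} (hD : D ⊆ range (n - 2)) :
    (range n).image (majShift D) = range n :=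
  eq_of_subset_of_card_le
    (image_subset_iff.2 fun i hi => mem_range.2 (majShift_lt hD (mem_range.1 hi)))
    (by rw [card_image_of_injective _ (majShift_injective D)])

end majShift

def Nat.succAbove (i j : ℕ) : ℕ := if j < i then j else j + 1

lemma Nat.succAbove_injective (i : ℕ) : Function.Injective (Nat.succAbove i) := by
  intro a b; simp only [Nat.succAbove]; split_ifs <;> omega

lemma mem_image_succAbove {D : Finset ℕ} {i j : ℕ} :
    j ∈ D.image (Nat.succAbove i) ↔ (j < i ∧ j ∈ D) ∨ (i < j ∧ j - 1 ∈ D) := by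
  simp only [mem_image, Nat.succAbove]
  constructor
  · rintro ⟨k, hk, rfl⟩
    split_ifs with h
    · exact Or.inl ⟨h, hk⟩
    · exact Or.inr ⟨by omega, by simpa using hk⟩
  · rintro (⟨h, hj⟩ | ⟨h, hj⟩)
    · exact ⟨j, hj, if_pos h⟩
    · exact ⟨j - 1, hj, by rw [if_neg (by omega)]; omega⟩

lemma sum_image_succAbove (D : Finset ℕ) (i : ℕ) :
    ∑ j ∈ D.image (Nat.succAbove i), (j + 1) = ∑ j ∈ D, (j + 1) + #{j ∈ D | i ≤ j} := by
  rw [sum_image fun a _ b _ h => Nat.succAbove_injective i h, card_filter, ← sum_add_distrib]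
  refine sum_congr rfl fun j _ => ?_
  simp only [Nat.succAbove]; split_ifs <;> omega

/-- Descents are indexed from `0`: `j ∈ descents l` is a descent at the position `j + 1` of
`majList`. -/
def descents (l : List ℕ) : Finset ℕ :=
  {j ∈ range (l.length - 1) | l.getD (j + 1) 0 < l.getD j 0}

lemma majList_eq_sum_descents (l : List ℕ) : majList l = ∑ j ∈ descents l, (j + 1) := by
  rw [descents, sum_filter]; rfl

lemma List.getD_insertIdx {α : Type*} {l : List α} {i j : ℕ} {a d : α} (hi : i ≤ l.length) :
    (l.insertIdx i a).getD j d =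
      if j < i then l.getD j d else if j = i then a else l.getD (j - 1) d := by
  simp only [List.getD_eq_getElem?_getD, List.getElem?_insertIdx]
  split_ifs <;> simp_all

lemma mem_descents_insertIdx {l : List ℕ} {a i j : ℕ} (ha : ∀ x ∈ l, a < x)
    (hi : i ≤ l.length) :
    j ∈ descents (l.insertIdx i a) ↔ j + 1 = i ∨ j ∈ (descents l).image (Nat.succAbove i) := by
  have hlt : ∀ k < l.length, a < l.getD k 0 := fun k hk => by
    rw [List.getD_eq_getElem _ _ hk]; exact ha _ (List.getElem_mem hk)
  simp only [mem_image_succAbove, descents, mem_filter, mem_range,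
    List.length_insertIdx_of_le_length hi, List.getD_insertIdx hi]
  grind

lemma majList_insertIdx {l : List ℕ} {a i : ℕ} (ha : ∀ x ∈ l, a < x) (hi : i ≤ l.length) :
    majList (l.insertIdx i a) = majList l + majShift (descents l) i := by
  rw [majList_eq_sum_descents, majList_eq_sum_descents, majShift, ← add_assoc,
    ← sum_image_succAbove]
  split_ifs with h
  · rw [add_zero]
    congr 1
    ext j
    rw [mem_descents_insertIdx ha hi, mem_image_succAbove]
    grind
  · have hnew : i - 1 ∉ (descents l).image (Nat.succAbove i) := by
      rw [mem_image_succAbove]; grind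
    have hD : descents (l.insertIdx i a) =
        insert (i - 1) ((descents l).image (Nat.succAbove i)) := by
      ext j
      rw [mem_insert, mem_descents_insertIdx ha hi]
      grind
    rw [hD, sum_insert hnew]
    omega

theorem maj_insert_one_general (n : ℕ) (l : List ℕ)
    (hl : l.Perm (List.range' 2 (n - 1))) :
    Set.InjOn (fun i => majList (l.insertIdx i 1)) (Set.Iio n) ∧
    (Finset.range n).image (fun i => majList (l.insertIdx i 1)) =
      (Finset.range n).image (fun j => majList l + j) := by
  have hlen : l.length = n - 1 := by simpa using hl.length_eq
  have hgt : ∀ x ∈ l, 1 < x := fun x hx => by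
    have := hl.mem_iff.1 hx
    rw [List.mem_range'_1] at this
    omega
  have hmaj : ∀ i < n, majList (l.insertIdx i 1) = majList l + majShift (descents l) i :=
    fun i hi => majList_insertIdx hgt (by omega)
  have hD : descents l ⊆ range (n - 2) := by
    rw [show n - 2 = l.length - 1 by omega]
    exact filter_subset _ _
  refine ⟨fun a ha b hb h => majShift_injective (descents l) ?_, ?_⟩
  · simpa [hmaj a ha, hmaj b hb] using h
  · conv_rhs => rw [← image_majShift_range hD, image_image]
    exact image_congr fun i hi => hmaj i (mem_range.1 hi)

theorem maj_insert_one (n : ℕ) (hn : 1 ≤ n) (l : List ℕ)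
    (hl : l.Perm (List.range' 2 (n - 1))) :
    Set.InjOn (fun i => majList (l.insertIdx i 1)) (Set.Iio n) ∧
    (Finset.range n).image (fun i => majList (l.insertIdx i 1)) =
      (Finset.range n).image (fun j => majList l + j) :=
  maj_insert_one_general n l hl
end

section
/- For every n ≥ 1, the statistics inv and maj are equidistributed over the symmetric group S_n; that is, for every k, the number of permutations of [n] with exactly k inversions equals the number of permutations of [n] with major index k. -/
open Finset
open scoped Classical

/-- major index of a permutation of [n], via its word π(1)…π(n) -/
def majPerm {n : ℕ} (π : Equiv.Perm (Fin n)) : ℕ := majList (List.ofFn (fun i => (π i : ℕ) + 1))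

/-- inversion number of a permutation of [n] -/
def invPerm {n : ℕ} (π : Equiv.Perm (Fin n)) : ℕ := invList (List.ofFn (fun i => (π i : ℕ) + 1))

/-- the matching M_π of [2m] with arcs (m+1-π(i), i+m) for 1 ≤ i ≤ m -/
def Mpi (m : ℕ) (π : Equiv.Perm (Fin m)) : Finset (ℕ × ℕ) :=
  Finset.univ.image (fun i : Fin m => (m + 1 - ((π i : ℕ) + 1), ((i : ℕ) + 1) + m))

/-- vertical displacement of the k-th step (k = 1,…,2n) of the lattice path L(S,T):
the two steps for vertex i are steps 2i-1 and 2i; the first step goes down unless i ∈ S,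
the second goes up unless i ∈ T. -/
def stepDelta (S T : Finset ℕ) (k : ℕ) : ℤ :=
  if k % 2 = 1 then (if (k + 1) / 2 ∈ S then 0 else -1) else (if k / 2 ∈ T then 0 else 1)

/-- the height (y-coordinate) of the lattice path L(S,T) after k steps -/
def pathHt (S T : Finset ℕ) (k : ℕ) : ℤ := ∑ j ∈ Finset.Icc 1 k, stepDelta S T j


/-!
Removing the largest letter `n + 1` from the word of a permutation of `[n + 1]` identifies it with
a pair `(σ, p)`: a permutation `σ` of `[n]` and the position `p ∈ {0, …, n}` of that letter.
Inserting `n + 1` at position `p` raises `inv` by `n - p`, and raises `maj` by an amount that,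
for fixed `σ`, also runs through `{0, …, n}` exactly once as `p` varies (MacMahon's insertion
argument). So the multisets `Dₙ` of values of `inv` and of `maj` satisfy the same recursion
`Dₙ₊₁ = ∑_{m ∈ Dₙ} {m, m + 1, …, m + n}`, and they agree by induction on `n`.
-/

open Equiv

namespace List

variable {α : Type*} {l : List α} {p j : ℕ} {x d : α}

lemma getD_insertIdx_of_lt (h : j < p) : (l.insertIdx p x).getD j d = l.getD j d := by
  simp [getD_eq_getElem?_getD, getElem?_insertIdx_of_lt h]

lemma getD_insertIdx_self (h : p ≤ l.length) : (l.insertIdx p x).getD p d = x := by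
  simp [getD_eq_getElem?_getD, getElem?_insertIdx_self, h]

lemma getD_insertIdx_of_gt (h : p < j) : (l.insertIdx p x).getD j d = l.getD (j - 1) d := by
  simp [getD_eq_getElem?_getD, getElem?_insertIdx_of_gt h]

lemma getD_lt_of_forall_lt [LT α] (h : ∀ y ∈ l, y < x) (hj : j < l.length) : l.getD j d < x := by
  rw [getD_eq_getElem _ _ hj]
  exact h _ (getElem_mem hj)

theorem ofFn_insertNth {n : ℕ} (p : Fin (n + 1)) (f : Fin n → α) :
    ofFn (Fin.insertNth p x f) = (ofFn f).insertIdx p x := by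
  refine ext_getElem (by simp [length_insertIdx, p.is_le]) fun j _ _ => ?_
  rw [List.getElem_ofFn, getElem_insertIdx]
  split_ifs with hlt heq
  · rw [Fin.insertNth_apply_below (by simpa [Fin.lt_def] using hlt)]
    simp only [eq_rec_constant, List.getElem_ofFn]
    rfl
  · rw [show (⟨j, _⟩ : Fin (n + 1)) = p from Fin.ext heq, Fin.insertNth_apply_same]
  · rw [Fin.insertNth_apply_above (by simp [Fin.lt_def]; omega)]
    simp only [eq_rec_constant, List.getElem_ofFn]
    rfl

end List

lemma Multiset.map_range_eq_self {m : ℕ} {f : ℕ → ℕ} (hf : ∀ i < m, f i < m)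
    (hinj : ∀ i j, i < j → j < m → f i ≠ f j) :
    (Multiset.range m).map f = Multiset.range m := by
  have hinjOn : Set.InjOn f (Finset.range m) := fun i hi j hj h => by
    rw [Finset.mem_coe, Finset.mem_range] at hi hj
    by_contra hne
    rcases lt_or_gt_of_ne hne with hij | hji
    exacts [hinj i j hij hj h, hinj j i hji hi h.symm]
  have himage : (Finset.range m).image f = Finset.range m :=
    eq_of_subset_of_card_le (fun x hx => by
      obtain ⟨i, hi, rfl⟩ := mem_image.1 hx
      exact mem_range.2 (hf i (mem_range.1 hi))) (card_image_of_injOn hinjOn).ge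
  rw [← range_val, ← image_val_of_injOn hinjOn, himage]

lemma Fin.univ_val_map_val_comp {α : Type*} {m : ℕ} (g : ℕ → α) :
    (univ : Finset (Fin m)).val.map (fun i : Fin m => g i) = (Multiset.range m).map g := by
  have : (univ : Finset (Fin m)).val.map Fin.val = Multiset.range m := by
    rw [← Finset.range_val, ← Nat.Iio_eq_range, ← Fin.map_valEmbedding_univ, Finset.map_val]
    rfl
  rw [← this, Multiset.map_map]
  rfl

lemma card_filter_eq_count_map {α β : Type*} [DecidableEq β] (s : Finset α) (f : α → β) (b : β) :
    #{a ∈ s | f a = b} = (s.val.map f).count b := by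
  rw [Multiset.count_map]
  simp only [eq_comm]
  rfl

/-- The permutation whose word is that of `σ` with the letter `n + 1` inserted at position `p`
(see `permWord_insertMax`). -/
def insertMax {n : ℕ} (p : Fin (n + 1)) (σ : Perm (Fin n)) : Perm (Fin (n + 1)) :=
  (finSuccEquiv' p).trans ((Equiv.optionCongr σ).trans (finSuccEquiv' (Fin.last n)).symm)

section insertMax

variable {n : ℕ} (p : Fin (n + 1)) (σ : Perm (Fin n))

@[simp]
lemma insertMax_apply_self : insertMax p σ p = Fin.last n := by
  simp [insertMax, finSuccEquiv'_at]

@[simp]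
lemma insertMax_apply_succAbove (i : Fin n) :
    insertMax p σ (p.succAbove i) = (σ i).castSucc := by
  simp [insertMax, finSuccEquiv'_succAbove, finSuccEquiv'_symm_some, Fin.succAbove_last]

end insertMax

lemma insertMax_bijective (n : ℕ) :
    Function.Bijective (fun x : Perm (Fin n) × Fin (n + 1) => insertMax x.2 x.1) := by
  refine (Fintype.bijective_iff_injective_and_card _).2 ⟨?_, ?_⟩
  · rintro ⟨σ, p⟩ ⟨τ, q⟩ h
    dsimp only at h
    obtain rfl : q = p := by
      by_contra hqp
      obtain ⟨i, rfl⟩ := Fin.exists_succAbove_eq hqp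
      have := insertMax_apply_self (p.succAbove i) τ
      rw [← h, insertMax_apply_succAbove] at this
      exact (Fin.castSucc_lt_last _).ne this
    refine Prod.ext (Equiv.ext fun i => Fin.castSucc_injective n ?_) rfl
    rw [← insertMax_apply_succAbove, h, insertMax_apply_succAbove]
  · simp [Fintype.card_perm, Nat.factorial_succ, mul_comm]

lemma map_univ_eq_bind_of_insertMax {n : ℕ} {st : Perm (Fin (n + 1)) → ℕ}
    {st₀ : Perm (Fin n) → ℕ} (f : Perm (Fin n) → ℕ → ℕ)
    (hf : ∀ σ, (Multiset.range (n + 1)).map (f σ) = Multiset.range (n + 1))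
    (hst : ∀ p σ, st (insertMax p σ) = st₀ σ + f σ p) :
    univ.val.map st = (univ.val.map st₀).bind fun m => (Multiset.range (n + 1)).map (m + ·) := by
  have hprod : (univ : Finset (Perm (Fin n) × Fin (n + 1))).val =
      (univ : Finset (Perm (Fin n))).val.bind fun σ => univ.val.map (Prod.mk σ) := rfl
  rw [← (Multiset.bijective_iff_map_univ_eq_univ _).1 (insertMax_bijective n), Multiset.map_map,
    Multiset.bind_map, hprod, Multiset.map_bind]
  refine Multiset.bind_congr fun σ _ => ?_
  conv_rhs => rw [← hf σ, Multiset.map_map]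
  rw [Multiset.map_map, ← Fin.univ_val_map_val_comp]
  simp only [Function.comp_def, hst]

lemma invList_ofFn {n : ℕ} (f : Fin n → ℕ) :
    invList (List.ofFn f) = #{q : Fin n × Fin n | q.1 < q.2 ∧ f q.2 < f q.1} := by
  symm
  apply card_bij (fun q _ => ((q.1 : ℕ), (q.2 : ℕ)))
  · rintro ⟨i, j⟩ h
    simpa [List.getD_eq_getElem?_getD] using h
  · rintro ⟨i, j⟩ _ ⟨i', j'⟩ _ h
    simp only [Prod.mk.injEq] at h
    exact Prod.ext (Fin.ext h.1) (Fin.ext h.2)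
  · rintro ⟨i, j⟩ h
    simp only [mem_filter, mem_product, mem_range, List.length_ofFn] at h
    obtain ⟨⟨hi, hj⟩, hij, hinv⟩ := h
    refine ⟨(⟨i, hi⟩, ⟨j, hj⟩), ?_, rfl⟩
    simpa [List.getD_eq_getElem?_getD, hi, hj, hij] using hinv

lemma invPerm_eq_sum {n : ℕ} (π : Perm (Fin n)) :
    invPerm π = ∑ i, ∑ j, if i < j ∧ π j < π i then 1 else 0 := by
  rw [invPerm, invList_ofFn, card_filter, Fintype.sum_prod_type]
  simp

lemma card_filter_lt_succAbove {n : ℕ} (p : Fin (n + 1)) :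
    #{j : Fin n | p < p.succAbove j} = n - p := by
  simp only [Fin.lt_succAbove_iff_le_castSucc, Fin.le_def, Fin.val_castSucc]
  have := card_filter_add_card_filter_not (s := univ) (p := fun i : Fin n => (i : ℕ) < p)
  simp only [Fin.card_filter_val_lt, not_lt, card_univ, Fintype.card_fin] at this
  omega

lemma invPerm_insertMax {n : ℕ} (p : Fin (n + 1)) (σ : Perm (Fin n)) :
    invPerm (insertMax p σ) = invPerm σ + (n - p) := by
  rw [invPerm_eq_sum, invPerm_eq_sum, Fin.sum_univ_succAbove _ p]
  simp_rw [Fin.sum_univ_succAbove _ p]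
  simp [Fin.succAbove_lt_succAbove_iff, Fin.castSucc_lt_castSucc_iff,
    not_lt.2 (Fin.castSucc_lt_last _).le, card_filter_lt_succAbove, add_comm]

def majTerm (w : List ℕ) (i : ℕ) : ℕ := if w.getD (i + 1) 0 < w.getD i 0 then i + 1 else 0

lemma majList_eq_sum_majTerm (w : List ℕ) :
    majList w = ∑ i ∈ range (w.length - 1), majTerm w i := rfl

def descentsFrom (w : List ℕ) (p : ℕ) : ℕ :=
  #{j ∈ Ico p (w.length - 1) | w.getD (j + 1) 0 < w.getD j 0}

/-- Inserting a letter larger than all letters of `w` at position `p < w.length` moves every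
descent right of `p` one step to the right, and creates a descent at `p`, which either replaces
the descent at `p - 1` (a net gain of `1`) or is new (a gain of `p + 1`). -/
def majIncrement (w : List ℕ) (p : ℕ) : ℕ :=
  (if p = w.length then 0 else if 0 < p ∧ w.getD p 0 < w.getD (p - 1) 0 then 1 else p + 1) +
    descentsFrom w p

section insertIdx

variable {w : List ℕ} {v p : ℕ}

lemma majTerm_insertIdx_of_lt {i : ℕ} (hi : i + 1 < p) :
    majTerm (w.insertIdx p v) i = majTerm w i := by
  simp only [majTerm, List.getD_insertIdx_of_lt hi,
    List.getD_insertIdx_of_lt (Nat.lt_of_succ_lt hi)]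

lemma majTerm_insertIdx_of_succ_eq (hv : ∀ x ∈ w, x < v) (hp : p ≤ w.length) {i : ℕ}
    (hi : i + 1 = p) : majTerm (w.insertIdx p v) i = 0 := by
  subst hi
  simp only [majTerm, List.getD_insertIdx_self hp,
    List.getD_insertIdx_of_lt (Nat.lt_add_one i)]
  rw [if_neg (List.getD_lt_of_forall_lt hv (by omega)).not_gt]

lemma majTerm_insertIdx_self (hv : ∀ x ∈ w, x < v) (hp : p < w.length) :
    majTerm (w.insertIdx p v) p = p + 1 := by
  simp only [majTerm, List.getD_insertIdx_self hp.le,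
    List.getD_insertIdx_of_gt (Nat.lt_add_one p), Nat.add_sub_cancel]
  rw [if_pos (List.getD_lt_of_forall_lt hv hp)]

lemma majTerm_insertIdx_of_gt {i : ℕ} (hi : p < i) :
    majTerm (w.insertIdx p v) i =
      majTerm w (i - 1) + if w.getD i 0 < w.getD (i - 1) 0 then 1 else 0 := by
  simp only [majTerm, List.getD_insertIdx_of_gt hi,
    List.getD_insertIdx_of_gt (Nat.lt_add_right 1 hi), Nat.add_sub_cancel,
    Nat.sub_add_cancel (Nat.one_le_of_lt hi)]
  split_ifs <;> omega

lemma sum_range_majTerm_insertIdx (hv : ∀ x ∈ w, x < v) (hp : p ≤ w.length) :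
    ∑ i ∈ range p, majTerm (w.insertIdx p v) i = ∑ i ∈ range (p - 1), majTerm w i := by
  rcases p with _ | m
  · simp
  rw [sum_range_succ, majTerm_insertIdx_of_succ_eq hv hp rfl, add_zero, Nat.add_sub_cancel]
  exact sum_congr rfl fun i hi => majTerm_insertIdx_of_lt (by simp at hi; omega)

lemma sum_Ico_majTerm_insertIdx (hp : p < w.length) :
    ∑ i ∈ Ico (p + 1) w.length, majTerm (w.insertIdx p v) i =
      ∑ j ∈ Ico p (w.length - 1), majTerm w j + descentsFrom w p := by
  rw [descentsFrom, card_filter, ← sum_add_distrib,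
    show w.length = w.length - 1 + 1 by omega, ← sum_Ico_add', Nat.add_sub_cancel]
  exact sum_congr rfl fun j hj => by
    rw [majTerm_insertIdx_of_gt (by simp at hj; omega), Nat.add_sub_cancel]

lemma majList_insertIdx_s2 (hv : ∀ x ∈ w, x < v) (hp : p ≤ w.length) :
    majList (w.insertIdx p v) = majList w + majIncrement w p := by
  rw [majList_eq_sum_majTerm, majList_eq_sum_majTerm, List.length_insertIdx_of_le_length hp,
    Nat.add_sub_cancel]
  rcases hp.eq_or_lt with rfl | hp
  · simpa [majIncrement, descentsFrom] using sum_range_majTerm_insertIdx hv le_rfl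
  rw [← sum_range_add_sum_Ico _ hp.le, sum_eq_sum_Ico_succ_bot hp, majTerm_insertIdx_self hv hp,
    sum_Ico_majTerm_insertIdx hp, sum_range_majTerm_insertIdx hv hp.le,
    ← sum_range_add_sum_Ico _ (show p ≤ w.length - 1 by omega), majIncrement, if_neg hp.ne]
  rcases p with _ | m
  · simp
    omega
  rw [sum_range_succ, majTerm, Nat.add_sub_cancel]
  split_ifs <;> omega

end insertIdx

section majIncrement

variable (w : List ℕ) {p q : ℕ}

lemma descentsFrom_le : descentsFrom w p ≤ w.length - 1 - p :=
  (card_filter_le _ _).trans (Nat.card_Ico _ _).le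

lemma descentsFrom_eq_add (hpq : p ≤ q) (hq : q ≤ w.length - 1) :
    descentsFrom w p = #{j ∈ Ico p q | w.getD (j + 1) 0 < w.getD j 0} + descentsFrom w q := by
  simp only [descentsFrom, card_filter]
  rw [sum_Ico_consecutive _ hpq hq]

lemma descentsFrom_eq_succ (hp : p < w.length - 1) :
    descentsFrom w p =
      (if w.getD (p + 1) 0 < w.getD p 0 then 1 else 0) + descentsFrom w (p + 1) := by
  rw [descentsFrom_eq_add w (Nat.le_succ p) hp, Nat.Ico_succ_singleton, filter_singleton]
  split_ifs <;> simp

lemma majIncrement_le (hp : p ≤ w.length) : majIncrement w p ≤ w.length := by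
  have := descentsFrom_le w (p := p)
  unfold majIncrement
  split_ifs <;> omega

/-- For `p < q`, the increment at `p` is the larger one if `w` has a descent at `q - 1` or if
`q = w.length`, and the smaller one otherwise. -/
lemma majIncrement_ne_of_lt (hpq : p < q) (hq : q ≤ w.length) :
    majIncrement w p ≠ majIncrement w q := by
  rcases hq.eq_or_lt with rfl | hq
  · have : descentsFrom w w.length = 0 := by simp [descentsFrom]
    unfold majIncrement
    split_ifs <;> omega
  obtain ⟨r, rfl⟩ : ∃ r, q = r + 1 := ⟨q - 1, by omega⟩
  have hsplit := descentsFrom_eq_add w (p := p) (q := r) (by omega) (by omega)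
  have hstep := descentsFrom_eq_succ w (p := r) (by omega)
  have hbound : #{j ∈ Ico p r | w.getD (j + 1) 0 < w.getD j 0} ≤ r - p :=
    (card_filter_le _ _).trans (Nat.card_Ico _ _).le
  unfold majIncrement
  rw [Nat.add_sub_cancel]
  split_ifs at hstep ⊢ <;> omega

lemma map_range_majIncrement :
    (Multiset.range (w.length + 1)).map (majIncrement w) = Multiset.range (w.length + 1) :=
  Multiset.map_range_eq_self (fun p hp => Nat.lt_succ_of_le (majIncrement_le w (by omega)))
    fun p q hpq hq => majIncrement_ne_of_lt w hpq (by omega)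

end majIncrement

def permWord {n : ℕ} (σ : Perm (Fin n)) : List ℕ := List.ofFn fun i => (σ i : ℕ) + 1

lemma permWord_insertMax {n : ℕ} (p : Fin (n + 1)) (σ : Perm (Fin n)) :
    permWord (insertMax p σ) = (permWord σ).insertIdx p (n + 1) := by
  have : (fun i => (insertMax p σ i : ℕ) + 1) = Fin.insertNth p (n + 1) fun i => (σ i : ℕ) + 1 :=
    Fin.eq_insertNth_iff.2 ⟨by simp, by funext i; simp [Fin.removeNth]⟩
  rw [permWord, this, List.ofFn_insertNth]
  rfl

lemma majPerm_insertMax {n : ℕ} (p : Fin (n + 1)) (σ : Perm (Fin n)) :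
    majPerm (insertMax p σ) = majPerm σ + majIncrement (permWord σ) p := by
  have hv : ∀ x ∈ permWord σ, x < n + 1 := by simp [permWord, List.mem_ofFn]
  show majList (permWord _) = majList (permWord σ) + _
  rw [permWord_insertMax, majList_insertIdx_s2 hv (by simp [permWord, p.is_le])]

lemma map_univ_invPerm_succ (n : ℕ) :
    (univ : Finset (Perm (Fin (n + 1)))).val.map invPerm =
      ((univ : Finset (Perm (Fin n))).val.map invPerm).bind
        fun m => (Multiset.range (n + 1)).map (m + ·) :=
  map_univ_eq_bind_of_insertMax (fun _ p => n - p)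
    (fun _ => Multiset.map_range_eq_self (by omega) (by omega)) invPerm_insertMax

lemma map_univ_majPerm_succ (n : ℕ) :
    (univ : Finset (Perm (Fin (n + 1)))).val.map majPerm =
      ((univ : Finset (Perm (Fin n))).val.map majPerm).bind
        fun m => (Multiset.range (n + 1)).map (m + ·) :=
  map_univ_eq_bind_of_insertMax (fun σ => majIncrement (permWord σ))
    (fun σ => by simpa [permWord] using map_range_majIncrement (permWord σ)) majPerm_insertMax

lemma map_univ_invPerm_eq_map_univ_majPerm (n : ℕ) :
    (univ : Finset (Perm (Fin n))).val.map invPerm =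
      (univ : Finset (Perm (Fin n))).val.map majPerm := by
  induction n with
  | zero => rfl
  | succ n ih => rw [map_univ_invPerm_succ, map_univ_majPerm_succ, ih]

theorem inv_maj_equidistributed_general (n : ℕ) (k : ℕ) :
    ((Finset.univ : Finset (Equiv.Perm (Fin n))).filter (fun π => invPerm π = k)).card =
      ((Finset.univ : Finset (Equiv.Perm (Fin n))).filter (fun π => majPerm π = k)).card := by
  rw [card_filter_eq_count_map, card_filter_eq_count_map, map_univ_invPerm_eq_map_univ_majPerm]

theorem inv_maj_equidistributed (n : ℕ) (hn : 1 ≤ n) (k : ℕ) :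
    ((Finset.univ : Finset (Equiv.Perm (Fin n))).filter (fun π => invPerm π = k)).card =
      ((Finset.univ : Finset (Equiv.Perm (Fin n))).filter (fun π => majPerm π = k)).card :=
  inv_maj_equidistributed_general n k
end

section
/- Fix S, T ⊆ [n] with |S| = |T|. Then ∑_{P ∈ P_n(S,T)} y^{Cr₂(P)} = ∏_{i ∉ T} (1 + y + ⋯ + y^{h(i)-1}), where for i ∉ T, h(i) = |T ∩ {i+1,…,n}| − |S ∩ {i+1,…,n}|. -/
open Finset
open scoped Classical

/-!
The map `P ↦ arcsOf P` is a bijection from `P_n(S,T)` onto the sets of arcs `(l, r)`, `l < r`,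
whose left endpoints run bijectively over `[n] \ T` and right endpoints over `[n] \ S`: a block
is recovered from its arcs as a connected component, and since at most one arc starts and at
most one arc ends at each point, two points of a component are always joined by an increasing
chain of arcs.

For such arc sets, remove the arc `(i, j)` at the largest left endpoint `i`. Every other arc starts
left of `i`, so `(i, j)` crosses exactly the arcs ending strictly between `i` and `j`; as `j` runs
over the `h(i)` right endpoints beyond `i`, this number runs over `0, …, h(i) - 1`. The remaining
arcs form an arc set of the same kind, for the same values of `h` at the remaining left endpoints,
so the product formula follows by induction.
-/

theorem Relation.eqvGen_iff_reflTransGen_or {α : Type*} {r : α → α → Prop}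
    (hr : Relator.RightUnique r) (hl : Relator.LeftUnique r) {a b : α} :
    EqvGen r a b ↔ ReflTransGen r a b ∨ ReflTransGen r b a := by
  refine ⟨fun h => ?_, fun h => h.elim (EqvGen.reflTransGen_le_eqvGen r a b)
    (fun h => EqvGen.symm _ _ (EqvGen.reflTransGen_le_eqvGen r b a h))⟩
  let comparable : Setoid α :=
    { r := fun a b => ReflTransGen r a b ∨ ReflTransGen r b a
      iseqv := by
        refine ⟨fun a => .inl .refl, Or.symm, ?_⟩
        rintro a b c (hab | hba) (hbc | hcb)
        · exact .inl (hab.trans hbc)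
        · rw [← reflTransGen_swap] at hab hcb
          have hl' : Relator.RightUnique (Function.swap r) := fun _ _ _ h h' => hl h h'
          simpa only [reflTransGen_swap, or_comm] using
            ReflTransGen.total_of_right_unique hl' hcb hab
        · exact ReflTransGen.total_of_right_unique hr hba hbc
        · exact .inr (hcb.trans hba) }
  exact Setoid.eqvGen_le (s := comparable) (fun a b h => .inl (.single h)) h

theorem Finset.sum_pow_card_filter_lt {α R : Type*} [LinearOrder α] [CommSemiring R] (y : R)
    (s : Finset α) : ∑ x ∈ s, y ^ #{z ∈ s | z < x} = ∑ k ∈ range #s, y ^ k := by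
  induction s using Finset.induction_on_max with
  | empty => simp
  | insert a s ha ih =>
    have ha' : a ∉ s := fun h => lt_irrefl a (ha a h)
    have hrank : ∀ x ∈ s, y ^ #{z ∈ insert a s | z < x} = y ^ #{z ∈ s | z < x} := fun x hx => by
      rw [filter_insert, if_neg (not_lt.2 (ha x hx).le)]
    rw [sum_insert ha', card_insert_of_notMem ha', sum_range_succ, sum_congr rfl hrank, ih,
      filter_insert, if_neg (lt_irrefl a), filter_true_of_mem ha, add_comm]

theorem Finpartition.ext_part {α : Type*} [DecidableEq α] {s : Finset α} {P Q : Finpartition s}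
    (h : ∀ a ∈ s, P.part a = Q.part a) : P = Q := by
  have hparts : ∀ R : Finpartition s, ∀ B, B ∈ R.parts ↔ ∃ a ∈ s, R.part a = B :=
    fun R B => ⟨fun hB => R.part_surjOn hB, by rintro ⟨a, ha, rfl⟩; exact R.part_mem.2 ha⟩
  ext B
  rw [hparts, hparts]
  exact exists_congr fun a => and_congr_right fun ha => by rw [h a ha]

theorem Finpartition.part_eq_part_of_mem {α : Type*} [DecidableEq α] {s : Finset α}
    (P : Finpartition s) {a b : α} (h : b ∈ P.part a) : P.part b = P.part a :=
  P.part_eq_of_mem (P.part_mem.2 (P.part_nonempty.1 ⟨b, h⟩)) h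

theorem cr2_eq_sum {α : Type*} [LinearOrder α] (A : Finset (α × α)) :
    cr2 A = ∑ f ∈ A, ∑ g ∈ A, if f.1 < g.1 ∧ g.1 < f.2 ∧ f.2 < g.2 then 1 else 0 := by
  rw [cr2, card_filter, sum_product]

theorem cr2_insert {α : Type*} [LinearOrder α] {A : Finset (α × α)} {e : α × α} (he : e ∉ A) :
    cr2 (insert e A) = cr2 A + #{f ∈ A | e.1 < f.1 ∧ f.1 < e.2 ∧ e.2 < f.2}
      + #{f ∈ A | f.1 < e.1 ∧ e.1 < f.2 ∧ f.2 < e.2} := by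
  simp only [cr2_eq_sum, sum_insert he, lt_irrefl, false_and, if_false, zero_add,
    sum_add_distrib, card_filter]
  ring

section ArcMatching

variable {α : Type*} [LinearOrder α] {I J : Finset α} {A : Finset (α × α)}

structure IsArcMatching (I J : Finset α) (A : Finset (α × α)) : Prop where
  lt : ∀ e ∈ A, e.1 < e.2
  bijOn_fst : Set.BijOn Prod.fst (A : Set (α × α)) I
  bijOn_snd : Set.BijOn Prod.snd (A : Set (α × α)) J

noncomputable def arcMatchings (I J : Finset α) : Finset (Finset (α × α)) :=
  {A ∈ (I ×ˢ J).powerset | IsArcMatching I J A}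

theorem mem_arcMatchings : A ∈ arcMatchings I J ↔ IsArcMatching I J A := by
  refine ⟨fun h => (mem_filter.1 h).2, fun h => mem_filter.2 ⟨mem_powerset.2 ?_, h⟩⟩
  exact fun e he => mem_product.2 ⟨h.bijOn_fst.mapsTo he, h.bijOn_snd.mapsTo he⟩

theorem arcMatchings_empty : arcMatchings (∅ : Finset α) ∅ = {∅} := by
  ext A
  simp only [mem_arcMatchings, mem_singleton]
  refine ⟨fun h => eq_empty_of_forall_notMem fun e he => ?_, ?_⟩
  · simpa using h.bijOn_fst.mapsTo he
  · rintro rfl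
    exact ⟨by simp, by simp [Set.bijOn_empty_iff_left], by simp [Set.bijOn_empty_iff_left]⟩

theorem IsArcMatching.image_snd (h : IsArcMatching I J A) : A.image Prod.snd = J := by
  rw [← coe_inj, coe_image, h.bijOn_snd.image_eq]

theorem IsArcMatching.eq_of_isArcMatching {I' J' : Finset α} (h : IsArcMatching I J A)
    (h' : IsArcMatching I' J' A) : I = I' ∧ J = J' :=
  ⟨coe_inj.1 (h.bijOn_fst.image_eq.symm.trans h'.bijOn_fst.image_eq),
    coe_inj.1 (h.bijOn_snd.image_eq.symm.trans h'.bijOn_snd.image_eq)⟩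

theorem IsArcMatching.insert_arc {i j : α} (h : IsArcMatching I (J.erase j) A) (hi : i ∉ I)
    (hj : j ∈ J) (hij : i < j) : IsArcMatching (insert i I) J (insert (i, j) A) := by
  refine ⟨?_, ?_, ?_⟩
  · simpa [hij] using h.lt
  · simpa only [coe_insert] using h.bijOn_fst.insert (a := (i, j)) hi
  · simpa only [coe_insert, coe_erase, Set.insert_sdiff_singleton,
      Set.insert_eq_of_mem (mem_coe.2 hj)] using
      h.bijOn_snd.insert (a := (i, j)) (by simp)

theorem IsArcMatching.erase_arc {e : α × α} (h : IsArcMatching I J A) (he : e ∈ A) :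
    IsArcMatching (I.erase e.1) (J.erase e.2) (A.erase e) := by
  refine ⟨fun f hf => h.lt f (mem_of_mem_erase hf), ?_, ?_⟩
  · simpa only [coe_erase] using h.bijOn_fst.sdiff_singleton (mem_coe.2 he)
  · simpa only [coe_erase] using h.bijOn_snd.sdiff_singleton (mem_coe.2 he)

theorem IsArcMatching.le_of_reflTransGen (hA : IsArcMatching I J A) {a b : α}
    (h : Relation.ReflTransGen (fun a b => (a, b) ∈ A) a b) : a ≤ b := by
  induction h with
  | refl => rfl
  | tail _ hbc ih => exact ih.trans (hA.lt _ hbc).le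

theorem cr2_insert_of_forall_fst_lt {e : α × α} (he : e ∉ A)
    (hA : ∀ f ∈ A, f.1 < e.1) :
    cr2 (insert e A) = cr2 A + #{f ∈ A | e.1 < f.2 ∧ f.2 < e.2} := by
  rw [cr2_insert he, filter_false_of_mem fun f hf h => (hA f hf).not_gt h.1, card_empty,
    add_zero]
  congr 2
  exact filter_congr fun f hf => ⟨fun h => h.2, fun h => ⟨hA f hf, h⟩⟩

theorem IsArcMatching.cr2_insert_of_forall_lt {i j : α} (h : IsArcMatching I (J.erase j) A)
    (hI : ∀ x ∈ I, x < i) :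
    cr2 (insert (i, j) A) = cr2 A + #{r ∈ {r ∈ J | i < r} | r < j} := by
  have hfst : ∀ f ∈ A, f.1 < i := fun f hf => hI _ (h.bijOn_fst.mapsTo hf)
  rw [cr2_insert_of_forall_fst_lt (fun hA => (hfst _ hA).false) hfst, filter_filter]
  congr 1
  calc #{f ∈ A | i < f.2 ∧ f.2 < j}
      = #({f ∈ A | i < f.2 ∧ f.2 < j}.image Prod.snd) :=
        (card_image_of_injOn (h.bijOn_snd.injOn.mono (filter_subset _ _))).symm
    _ = #{r ∈ J.erase j | i < r ∧ r < j} := by rw [← h.image_snd, filter_image]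
    _ = #{r ∈ J | i < r ∧ r < j} := by
        rw [filter_erase, erase_eq_of_notMem (by simp)]

theorem sum_arcMatchings_insert_of_forall_lt {M : Type*} [AddCommMonoid M]
    (F : Finset (α × α) → M) {i : α} (hI : ∀ x ∈ I, x < i) :
    ∑ A ∈ arcMatchings (insert i I) J, F A =
      ∑ j ∈ J with i < j, ∑ A ∈ arcMatchings I (J.erase j), F (insert (i, j) A) := by
  have hi : i ∉ I := fun h => (hI i h).false
  rw [sum_sigma']
  symm
  refine sum_bij (fun p _ => insert (i, p.1) p.2) ?_ ?_ ?_ (fun _ _ => rfl)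
  · rintro ⟨j, A⟩ hp
    obtain ⟨hj, hA⟩ := mem_sigma.1 hp
    obtain ⟨hjJ, hij⟩ := mem_filter.1 hj
    exact mem_arcMatchings.2 ((mem_arcMatchings.1 hA).insert_arc hi hjJ hij)
  · rintro ⟨j, A⟩ hp ⟨j', A'⟩ hp' heq
    have hfree : ∀ {K : Finset α} {B : Finset (α × α)} {k : α}, B ∈ arcMatchings I K →
        (i, k) ∉ B := fun hB hk => hi ((mem_arcMatchings.1 hB).bijOn_fst.mapsTo hk)
    have hA := (mem_sigma.1 hp).2
    have hA' := (mem_sigma.1 hp').2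
    have hjj : j = j' := by
      have := heq ▸ mem_insert_self (i, j) A
      rcases mem_insert.1 this with h | h
      · exact (Prod.ext_iff.1 h).2
      · exact absurd h (hfree hA')
    subst hjj
    have := congrArg (Finset.erase · (i, j)) heq
    simp only [erase_insert (hfree hA), erase_insert (hfree hA')] at this
    rw [this]
  · intro A hA
    have hA := mem_arcMatchings.1 hA
    obtain ⟨e, he, hei⟩ := hA.bijOn_fst.surjOn (mem_insert_self i I)
    obtain ⟨ei, j⟩ := e
    simp only at hei
    subst hei
    have hm := hA.erase_arc he
    simp only [erase_insert hi] at hm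
    refine ⟨⟨j, A.erase (ei, j)⟩, mem_sigma.2 ⟨mem_filter.2 ⟨hA.bijOn_snd.mapsTo he, hA.lt _ he⟩,
      mem_arcMatchings.2 hm⟩, insert_erase he⟩

theorem sum_arcMatchings_pow_cr2 {R : Type*} [CommSemiring R] (y : R) (I J : Finset α)
    (hIJ : #I = #J) :
    ∑ A ∈ arcMatchings I J, y ^ cr2 A =
      ∏ i ∈ I, ∑ k ∈ range (#{r ∈ J | i < r} - #{l ∈ I | i < l}), y ^ k := by
  induction I using Finset.induction_on_max generalizing J with
  | empty =>
    rw [card_eq_zero.1 hIJ.symm, arcMatchings_empty]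
    simp [cr2]
  | insert a I ha ih =>
    have ha' : a ∉ I := fun h => (ha a h).false
    have hexp : ∀ j ∈ J, a < j → ∀ i ∈ I,
        #{r ∈ J.erase j | i < r} - #{l ∈ I | i < l} =
          #{r ∈ J | i < r} - #{l ∈ insert a I | i < l} := fun j hj haj i hi => by
      rw [filter_erase,
        card_erase_of_mem (s := {r ∈ J | i < r}) (mem_filter.2 ⟨hj, (ha i hi).trans haj⟩),
        filter_insert, if_pos (ha i hi), card_insert_of_notMem (by simp [ha'])]
      omega
    have hfiber : ∀ j ∈ {r ∈ J | a < r},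
        ∑ A ∈ arcMatchings I (J.erase j), y ^ cr2 (insert (a, j) A) =
          y ^ #{r ∈ {r ∈ J | a < r} | r < j} *
            ∏ i ∈ I, ∑ k ∈ range (#{r ∈ J | i < r} - #{l ∈ insert a I | i < l}), y ^ k := by
      intro j hj
      obtain ⟨hjJ, haj⟩ := mem_filter.1 hj
      have hcard : #I = #(J.erase j) := by
        rw [card_erase_of_mem hjJ, ← hIJ, card_insert_of_notMem ha', Nat.add_sub_cancel]
      calc ∑ A ∈ arcMatchings I (J.erase j), y ^ cr2 (insert (a, j) A)
          = ∑ A ∈ arcMatchings I (J.erase j), y ^ cr2 A * y ^ #{r ∈ {r ∈ J | a < r} | r < j} :=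
            sum_congr rfl fun A hA => by
              rw [(mem_arcMatchings.1 hA).cr2_insert_of_forall_lt ha, pow_add]
        _ = _ := by
            rw [← sum_mul, ih _ hcard, mul_comm]
            exact congrArg _ (prod_congr rfl fun i hi => by rw [hexp j hjJ haj i hi])
    rw [sum_arcMatchings_insert_of_forall_lt _ ha, sum_congr rfl hfiber, ← sum_mul,
      sum_pow_card_filter_lt, prod_insert ha', filter_insert, if_neg (lt_irrefl a),
      filter_false_of_mem fun l hl => (ha l hl).not_gt, card_empty, Nat.sub_zero]

end ArcMatching

section Partition

variable {n : ℕ}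

theorem mem_arcsOf {P : Finpartition (Icc 1 n)} {i j : ℕ} :
    (i, j) ∈ arcsOf P ↔ i < j ∧ j ∈ P.part i ∧ ∀ k ∈ P.part i, i < k → j ≤ k := by
  simp only [arcsOf, mem_filter, mem_product]
  constructor
  · rintro ⟨⟨hi, -⟩, hij, B, hB, hiB, hjB, hgap⟩
    rw [P.part_eq_of_mem hB hiB]
    exact ⟨hij, hjB, fun k hk hik => not_lt.1 (hgap k hk hik)⟩
  · rintro ⟨hij, hj, hmin⟩
    have hi : i ∈ Icc 1 n := P.part_nonempty.1 ⟨j, hj⟩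
    exact ⟨⟨hi, P.part_subset i hj⟩, hij, P.part i, P.part_mem.2 hi, P.mem_part hi, hj,
      fun k hk hik hkj => (hmin k hk hik).not_gt hkj⟩

theorem maxsetOf_subset {P : Finpartition (Icc 1 n)} : maxsetOf P ⊆ Icc 1 n := filter_subset _ _

theorem minsetOf_subset {P : Finpartition (Icc 1 n)} : minsetOf P ⊆ Icc 1 n := filter_subset _ _

theorem mem_sdiff_maxsetOf {P : Finpartition (Icc 1 n)} {i : ℕ} :
    i ∈ Icc 1 n \ maxsetOf P ↔ ∃ j ∈ P.part i, i < j := by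
  simp only [mem_sdiff, maxsetOf, mem_filter, not_and, not_exists, not_forall, not_le]
  constructor
  · rintro ⟨hi, hmax⟩
    obtain ⟨j, hj, hij⟩ := hmax hi _ (P.part_mem.2 hi) (P.mem_part hi)
    exact ⟨j, hj, hij⟩
  · rintro ⟨j, hj, hij⟩
    have hi := P.part_nonempty.1 ⟨j, hj⟩
    refine ⟨hi, fun _ B hB hiB => ⟨j, ?_, hij⟩⟩
    rwa [← P.part_eq_of_mem hB hiB]

theorem mem_sdiff_minsetOf {P : Finpartition (Icc 1 n)} {j : ℕ} :
    j ∈ Icc 1 n \ minsetOf P ↔ ∃ i ∈ P.part j, i < j := by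
  simp only [mem_sdiff, minsetOf, mem_filter, not_and, not_exists, not_forall, not_le]
  constructor
  · rintro ⟨hj, hmin⟩
    obtain ⟨i, hi, hij⟩ := hmin hj _ (P.part_mem.2 hj) (P.mem_part hj)
    exact ⟨i, hi, hij⟩
  · rintro ⟨i, hi, hij⟩
    have hj := P.part_nonempty.1 ⟨i, hi⟩
    refine ⟨hj, fun _ B hB hjB => ⟨i, ?_, hij⟩⟩
    rwa [← P.part_eq_of_mem hB hjB]

theorem bijOn_fst_arcsOf (P : Finpartition (Icc 1 n)) :
    Set.BijOn Prod.fst (arcsOf P : Set (ℕ × ℕ)) (Icc 1 n \ maxsetOf P : Finset ℕ) := by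
  refine ⟨?_, ?_, ?_⟩
  · rintro ⟨i, j⟩ he
    obtain ⟨hij, hj, -⟩ := mem_arcsOf.1 he
    exact mem_sdiff_maxsetOf.2 ⟨j, hj, hij⟩
  · rintro ⟨i, j⟩ he ⟨i', j'⟩ he' (rfl : i = i')
    obtain ⟨hij, hj, hmin⟩ := mem_arcsOf.1 he
    obtain ⟨hij', hj', hmin'⟩ := mem_arcsOf.1 he'
    rw [le_antisymm (hmin j' hj' hij') (hmin' j hj hij)]
  · intro i hi
    obtain ⟨j, hj, hij⟩ := mem_sdiff_maxsetOf.1 hi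
    have hne : {k ∈ P.part i | i < k}.Nonempty := ⟨j, mem_filter.2 ⟨hj, hij⟩⟩
    obtain ⟨hj, hij⟩ := mem_filter.1 (min'_mem _ hne)
    exact ⟨(i, _), mem_arcsOf.2 ⟨hij, hj, fun k hk hik => min'_le _ _ (mem_filter.2 ⟨hk, hik⟩)⟩,
      rfl⟩

theorem bijOn_snd_arcsOf (P : Finpartition (Icc 1 n)) :
    Set.BijOn Prod.snd (arcsOf P : Set (ℕ × ℕ)) (Icc 1 n \ minsetOf P : Finset ℕ) := by
  refine ⟨?_, ?_, ?_⟩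
  · rintro ⟨i, j⟩ he
    obtain ⟨hij, hj, -⟩ := mem_arcsOf.1 he
    refine mem_sdiff_minsetOf.2 ⟨i, ?_, hij⟩
    rw [P.part_eq_part_of_mem hj]
    exact P.mem_part (P.part_nonempty.1 ⟨j, hj⟩)
  · rintro ⟨i, j⟩ he ⟨i', j'⟩ he' (rfl : j = j')
    obtain ⟨hij, hj, hmin⟩ := mem_arcsOf.1 he
    obtain ⟨hij', hj', hmin'⟩ := mem_arcsOf.1 he'
    have hpart : P.part i' = P.part i := by
      rw [← P.part_eq_part_of_mem hj, P.part_eq_part_of_mem hj']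
    have hi : i ∈ P.part i' := hpart ▸ P.mem_part (P.part_nonempty.1 ⟨j, hj⟩)
    have hi' : i' ∈ P.part i := hpart ▸ P.mem_part (P.part_nonempty.1 ⟨j, hj'⟩)
    rcases lt_trichotomy i i' with h | rfl | h
    · exact absurd (hmin i' hi' h) (not_le.2 hij')
    · rfl
    · exact absurd (hmin' i hi h) (not_le.2 hij)
  · intro j hj
    obtain ⟨i, hi, hij⟩ := mem_sdiff_minsetOf.1 hj
    have hne : {k ∈ P.part j | k < j}.Nonempty := ⟨i, mem_filter.2 ⟨hi, hij⟩⟩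
    obtain ⟨hi, hij⟩ := mem_filter.1 (max'_mem _ hne)
    have hpart := P.part_eq_part_of_mem hi
    refine ⟨(_, j), mem_arcsOf.2 ⟨hij, ?_, fun k hk hik => ?_⟩, rfl⟩
    · rw [hpart]
      exact P.mem_part (mem_sdiff.1 hj).1
    rw [hpart] at hk
    exact not_lt.1 fun hkj => (le_max' _ k (mem_filter.2 ⟨hk, hkj⟩)).not_gt hik

theorem isArcMatching_arcsOf (P : Finpartition (Icc 1 n)) :
    IsArcMatching (Icc 1 n \ maxsetOf P) (Icc 1 n \ minsetOf P) (arcsOf P) :=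
  ⟨fun _ he => (mem_filter.1 he).2.1, bijOn_fst_arcsOf P, bijOn_snd_arcsOf P⟩

theorem reflTransGen_arcsOf (P : Finpartition (Icc 1 n)) {a b : ℕ} (hb : b ∈ P.part a)
    (hab : a ≤ b) : Relation.ReflTransGen (fun a b => (a, b) ∈ arcsOf P) a b := by
  induction hd : b - a using Nat.strong_induction_on generalizing a with
  | _ d ih =>
    rcases hab.eq_or_lt with rfl | hab
    · exact .refl
    have hne : {k ∈ P.part a | a < k}.Nonempty := ⟨b, mem_filter.2 ⟨hb, hab⟩⟩
    set c := min' _ hne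
    obtain ⟨hc, hac⟩ := mem_filter.1 (min'_mem _ hne)
    have hcb : c ≤ b := min'_le _ _ (mem_filter.2 ⟨hb, hab⟩)
    have harc : (a, c) ∈ arcsOf P :=
      mem_arcsOf.2 ⟨hac, hc, fun k hk hak => min'_le _ _ (mem_filter.2 ⟨hk, hak⟩)⟩
    exact .head harc (ih (b - c) (by omega) (by rwa [P.part_eq_part_of_mem hc]) hcb rfl)

noncomputable def partitionOfArcs (n : ℕ) (A : Finset (ℕ × ℕ)) : Finpartition (Icc 1 n) :=
  Finpartition.ofSetSetoid (Relation.EqvGen.setoid fun a b => (a, b) ∈ A) (Icc 1 n)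

theorem mem_part_partitionOfArcs {A : Finset (ℕ × ℕ)} {a b : ℕ} :
    b ∈ (partitionOfArcs n A).part a ↔
      a ∈ Icc 1 n ∧ b ∈ Icc 1 n ∧ Relation.EqvGen (fun a b => (a, b) ∈ A) a b :=
  Finpartition.mem_part_ofSetSetoid_iff_rel _

theorem arcsOf_partitionOfArcs {I J : Finset ℕ} {A : Finset (ℕ × ℕ)} (hA : IsArcMatching I J A)
    (hI : I ⊆ Icc 1 n) (hJ : J ⊆ Icc 1 n) : arcsOf (partitionOfArcs n A) = A := by
  set r : ℕ → ℕ → Prop := fun a b => (a, b) ∈ A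
  have hr : Relator.RightUnique r := fun a b c hab hac =>
    (Prod.ext_iff.1 (hA.bijOn_fst.injOn (x₁ := (a, b)) (x₂ := (a, c)) hab hac rfl)).2
  have hl : Relator.LeftUnique r := fun a b c hac hbc =>
    (Prod.ext_iff.1 (hA.bijOn_snd.injOn (x₁ := (a, c)) (x₂ := (b, c)) hac hbc rfl)).1
  have hfst : ∀ {a b}, r a b → a ∈ Icc 1 n := fun h => hI (hA.bijOn_fst.mapsTo h)
  have hsnd : ∀ {a b}, r a b → b ∈ Icc 1 n := fun h => hJ (hA.bijOn_snd.mapsTo h)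
  have hup : ∀ {i k}, i < k → k ∈ (partitionOfArcs n A).part i → ∃ c, r i c ∧ c ≤ k := by
    intro i k hik hk
    obtain ⟨-, -, hrel⟩ := mem_part_partitionOfArcs.1 hk
    rcases (Relation.eqvGen_iff_reflTransGen_or hr hl).1 hrel with h | h
    · rcases h.cases_head with rfl | ⟨c, hic, hck⟩
      · exact (lt_irrefl i hik).elim
      · exact ⟨c, hic, hA.le_of_reflTransGen hck⟩
    · exact absurd (hA.le_of_reflTransGen h) (not_le.2 hik)
  ext ⟨i, j⟩
  rw [mem_arcsOf]
  constructor
  · rintro ⟨hij, hj, hmin⟩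
    obtain ⟨c, hic, hcj⟩ := hup hij hj
    have hc : c ∈ (partitionOfArcs n A).part i :=
      mem_part_partitionOfArcs.2 ⟨hfst hic, hsnd hic, Relation.EqvGen.rel _ _ hic⟩
    rwa [le_antisymm hcj (hmin c hc (hA.lt _ hic))] at hic
  · intro hij
    refine ⟨hA.lt _ hij,
      mem_part_partitionOfArcs.2 ⟨hfst hij, hsnd hij, Relation.EqvGen.rel _ _ hij⟩,
      fun k hk hik => ?_⟩
    obtain ⟨c, hic, hck⟩ := hup hik hk
    rwa [hr hij hic]

theorem partitionOfArcs_arcsOf (P : Finpartition (Icc 1 n)) :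
    partitionOfArcs n (arcsOf P) = P := by
  have hsame : ∀ a b, Relation.EqvGen (fun a b => (a, b) ∈ arcsOf P) a b → P.part a = P.part b :=
    fun a b h => Setoid.eqvGen_le (s := Setoid.ker P.part)
      (fun a b hab => (P.part_eq_part_of_mem (mem_arcsOf.1 hab).2.1).symm) h
  refine Finpartition.ext_part fun a ha => ?_
  ext b
  rw [mem_part_partitionOfArcs]
  constructor
  · rintro ⟨-, hb, hab⟩
    rw [hsame a b hab]
    exact P.mem_part hb
  · intro hb
    refine ⟨ha, P.part_subset a hb, ?_⟩
    rcases le_total a b with hab | hba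
    · exact Relation.EqvGen.reflTransGen_le_eqvGen _ _ _ (reflTransGen_arcsOf P hb hab)
    · have ha' : a ∈ P.part b := by rw [P.part_eq_part_of_mem hb]; exact P.mem_part ha
      exact .symm _ _
        (Relation.EqvGen.reflTransGen_le_eqvGen _ _ _ (reflTransGen_arcsOf P ha' hba))

theorem partitionOfArcs_mem_pnST {S T : Finset ℕ} {A : Finset (ℕ × ℕ)} (hS : S ⊆ Icc 1 n)
    (hT : T ⊆ Icc 1 n) (hA : IsArcMatching (Icc 1 n \ T) (Icc 1 n \ S) A) :
    partitionOfArcs n A ∈ pnST n S T := by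
  set Q := partitionOfArcs n A
  have hQ := isArcMatching_arcsOf Q
  rw [arcsOf_partitionOfArcs hA sdiff_subset sdiff_subset] at hQ
  obtain ⟨hmax, hmin⟩ := hQ.eq_of_isArcMatching hA
  rw [sdiff_eq_sdiff_iff_inter_eq_inter, inter_eq_right.2 hT,
    inter_eq_right.2 maxsetOf_subset] at hmax
  rw [sdiff_eq_sdiff_iff_inter_eq_inter, inter_eq_right.2 hS,
    inter_eq_right.2 minsetOf_subset] at hmin
  exact mem_filter.2 ⟨mem_univ _, hmin, hmax⟩

theorem card_filter_sdiff_sub_card_filter_sdiff (S T : Finset ℕ) (i : ℕ) :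
    #{r ∈ Icc 1 n \ S | i < r} - #{l ∈ Icc 1 n \ T | i < l} = hST n S T i := by
  have hcount : ∀ U : Finset ℕ,
      #{r ∈ Icc 1 n \ U | i < r} + #(U ∩ Icc (i + 1) n) = #(Icc (i + 1) n) := fun U => by
    have hfilter : {r ∈ Icc 1 n \ U | i < r} = Icc (i + 1) n \ U := by
      ext r
      simp only [mem_filter, mem_sdiff, mem_Icc]
      exact ⟨fun ⟨⟨⟨_, hrn⟩, hrU⟩, hir⟩ => ⟨⟨hir, hrn⟩, hrU⟩,
        fun ⟨⟨hir, hrn⟩, hrU⟩ => ⟨⟨⟨by omega, hrn⟩, hrU⟩, hir⟩⟩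
    rw [hfilter, inter_comm, card_sdiff_add_card_inter]
  have hS := hcount S
  have hT := hcount T
  unfold hST
  omega

end Partition

theorem cr2_generating_function (n : ℕ) (S T : Finset ℕ)
    (hS : S ⊆ Finset.Icc 1 n) (hT : T ⊆ Finset.Icc 1 n) (hcard : S.card = T.card)
    (R : Type*) [CommRing R] (y : R) :
    ∑ P ∈ pnST n S T, y ^ cr2 (arcsOf P) =
      ∏ i ∈ Finset.Icc 1 n \ T, ∑ j ∈ Finset.range (hST n S T i), y ^ j := by
  have hcard' : #(Icc 1 n \ T) = #(Icc 1 n \ S) := by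
    rw [card_sdiff_of_subset hT, card_sdiff_of_subset hS, hcard]
  calc ∑ P ∈ pnST n S T, y ^ cr2 (arcsOf P)
      = ∑ A ∈ arcMatchings (Icc 1 n \ T) (Icc 1 n \ S), y ^ cr2 A := by
        refine sum_nbij' arcsOf (partitionOfArcs n) (fun P hP => ?_)
          (fun A hA => partitionOfArcs_mem_pnST hS hT (mem_arcMatchings.1 hA))
          (fun P _ => partitionOfArcs_arcsOf P)
          (fun A hA => arcsOf_partitionOfArcs (mem_arcMatchings.1 hA) sdiff_subset sdiff_subset)
          (fun _ _ => rfl)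
        obtain ⟨-, hmin, hmax⟩ := mem_filter.1 hP
        exact mem_arcMatchings.2 (hmin ▸ hmax ▸ isArcMatching_arcsOf P)
    _ = ∏ i ∈ Icc 1 n \ T, ∑ j ∈ range (hST n S T i), y ^ j := by
        rw [sum_arcMatchings_pow_cr2 y _ _ hcard']
        simp only [card_filter_sdiff_sub_card_filter_sdiff]
end

section
/- Let π be a permutation of [m] and let M_π be the matching of [2m] with arcs (m+1−π(i), i+m) for 1 ≤ i ≤ m. Then pmaj(M_π) = maj(π). -/
open Finset
open scoped Classical

/-! In `M_π` every right endpoint `m + 1, …, 2m` lies to the right of every left endpoint, and the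
arc ending at `m + j` carries the label `π(j)`. So when the scan reaches `m + j` the sequence `σ`
is the suffix `π(j) ⋯ π(m)`, the left endpoints contribute nothing, and
`pmaj(M_π) = ∑_j des(π(j) ⋯ π(m)) = maj(π)`, because a descent at position `i` lies in exactly
`i` of these suffixes. -/

lemma desList_cons_cons (a b : ℕ) (t : List ℕ) :
    desList (a :: b :: t) = (if b < a then 1 else 0) + desList (b :: t) := by
  by_cases h : b < a <;> simp [desList, h, Nat.add_comm]

lemma desList_eq_sum : ∀ l : List ℕ,
    desList l = ∑ i ∈ Finset.range (l.length - 1), if l.getD (i + 1) 0 < l.getD i 0 then 1 else 0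
  | [] | [_] => rfl
  | a :: b :: t => by
    rw [desList_cons_cons, desList_eq_sum (b :: t)]
    simp only [List.length_cons, Nat.add_sub_cancel]
    rw [sum_range_succ' _ t.length]
    simp only [List.getD_cons_succ, List.getD_cons_zero]
    omega

lemma majList_cons (a : ℕ) (t : List ℕ) : majList (a :: t) = desList (a :: t) + majList t := by
  rcases t with _ | ⟨b, t⟩
  · rfl
  rw [desList_eq_sum]
  simp only [majList, List.length_cons, Nat.add_sub_cancel]
  rw [sum_range_succ', sum_range_succ']
  simp only [List.getD_cons_succ, List.getD_cons_zero, Nat.zero_add]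
  rw [add_right_comm, ← sum_add_distrib]
  congr 1
  refine sum_congr rfl fun i _ => ?_
  split_ifs <;> omega

lemma sum_desList_drop (l : List ℕ) :
    ∑ k ∈ Finset.range l.length, desList (l.drop k) = majList l := by
  induction l with
  | nil => rfl
  | cons a t ih => rw [List.length_cons, sum_range_succ', majList_cons, ← ih]; simp [add_comm]

section PmajScan

variable {α : Type*} [LinearOrder α] (A : Finset (α × α))

noncomputable def pmajStep (st : List (α × α) × ℕ) (i : α) : List (α × α) × ℕ :=
  let σ₁ := st.1.filter (fun e => e.1 ≠ i)
  let ends := (A.filter (fun e => e.2 = i)).toList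
  let σ₂ := ends ++ σ₁
  (σ₂, st.2 + if ends.isEmpty then 0 else desList (σ₂.map (labelArc A)))

lemma pmajArcs_eq_foldr : pmajArcs A =
    (((A.image Prod.fst ∪ A.image Prod.snd).sort (· ≤ ·)).foldr
      (fun i st => pmajStep A st i) ([], 0)).2 := by
  rw [pmajArcs, List.foldl_reverse]
  rfl

lemma pmajStep_snd_of_forall_snd_ne {i : α} (hi : ∀ e ∈ A, e.2 ≠ i)
    (st : List (α × α) × ℕ) : (pmajStep A st i).2 = st.2 := by
  have : A.filter (fun e => e.2 = i) = ∅ := filter_eq_empty_iff.2 hi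
  simp [pmajStep, this]

lemma foldr_pmajStep_snd_of_forall_snd_ne {l : List α} (hl : ∀ i ∈ l, ∀ e ∈ A, e.2 ≠ i)
    (st : List (α × α) × ℕ) : (l.foldr (fun i st => pmajStep A st i) st).2 = st.2 := by
  induction l with
  | nil => rfl
  | cons i l ih =>
    rw [List.foldr_cons, pmajStep_snd_of_forall_snd_ne A (hl i List.mem_cons_self),
      ih fun j hj => hl j (List.mem_cons_of_mem i hj)]

lemma pmajStep_of_filter_snd_eq_singleton {i : α} {e : α × α}
    (he : A.filter (fun f => f.2 = i) = {e}) {σ : List (α × α)} (hσ : ∀ f ∈ σ, f.1 ≠ i)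
    (c : ℕ) : pmajStep A (σ, c) i = (e :: σ, c + desList ((e :: σ).map (labelArc A))) := by
  have hkeep : σ.filter (fun f => f.1 ≠ i) = σ := List.filter_eq_self.2 (by simpa using hσ)
  simp only [pmajStep, he, hkeep, toList_singleton, List.singleton_append, List.isEmpty_cons]
  rfl

end PmajScan

lemma sort_Icc_one (n : ℕ) : (Icc 1 n).sort (· ≤ ·) = List.range' 1 n := by
  rw [← List.toFinset_range'_1_1]
  exact (List.toFinset_sort _ List.nodup_range').2
    ((List.pairwise_lt_range' (s := 1) (n := n)).imp le_of_lt)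

section MatchingOfPerm

variable {m : ℕ} (π : Equiv.Perm (Fin m))

def mpiArc (i : Fin m) : ℕ × ℕ := (m + 1 - ((π i : ℕ) + 1), ((i : ℕ) + 1) + m)

lemma Mpi_eq_image : Mpi m π = univ.image (mpiArc π) := rfl

lemma mpiArc_injective : Function.Injective (mpiArc π) := fun a b h => by
  have := congrArg Prod.snd h
  simp only [mpiArc] at this
  exact Fin.ext (by omega)

lemma card_filter_apply_lt_apply (i : Fin m) : #{k | π k < π i} = π i := by
  have : ({k | π k < π i} : Finset (Fin m)) = (Iio (π i)).map π.symm.toEmbedding := by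
    ext
    simp
  rw [this, card_map, Fin.card_Iio]

lemma labelArc_Mpi_mpiArc (i : Fin m) : labelArc (Mpi m π) (mpiArc π i) = π i + 1 := by
  rw [labelArc, Mpi_eq_image, filter_image, card_image_of_injective _ (mpiArc_injective π),
    ← card_filter_apply_lt_apply π i]
  congr 2
  ext k
  have := (π k).isLt
  have := (π i).isLt
  simp only [mpiArc, Nat.reduceSubDiff, mem_filter, mem_univ, true_and, Fin.lt_def]
  omega

lemma map_labelArc_ofFn_mpiArc :
    (List.ofFn (mpiArc π)).map (labelArc (Mpi m π)) = List.ofFn fun i => (π i : ℕ) + 1 := by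
  simp [List.map_ofFn, Function.comp_def, labelArc_Mpi_mpiArc]

lemma endpoints_Mpi : (Mpi m π).image Prod.fst ∪ (Mpi m π).image Prod.snd = Icc 1 (m + m) := by
  ext x
  simp only [Mpi_eq_image, image_image, mem_union, mem_image, mem_univ, true_and, mem_Icc,
    Function.comp_apply, mpiArc]
  constructor
  · rintro (⟨i, rfl⟩ | ⟨i, rfl⟩) <;> omega
  · intro hx
    by_cases hxm : x ≤ m
    · exact .inl ⟨π.symm ⟨m - x, by omega⟩, by simp; omega⟩
    · exact .inr ⟨⟨x - m - 1, by omega⟩, by simp; omega⟩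

lemma lt_snd_of_mem_Mpi {e : ℕ × ℕ} (he : e ∈ Mpi m π) : m < e.2 := by
  obtain ⟨i, -, rfl⟩ := mem_image.1 he
  dsimp only [mpiArc]
  omega

lemma filter_Mpi_snd_eq {j : ℕ} (hj : j < m) :
    (Mpi m π).filter (fun e => e.2 = m + 1 + j) = {mpiArc π ⟨j, hj⟩} := by
  rw [Mpi_eq_image, filter_image, ← image_singleton]
  congr 1
  ext i
  simp only [mpiArc, Nat.reduceSubDiff, mem_filter, mem_univ, true_and, mem_singleton,
    Fin.ext_iff]
  omega

lemma foldr_pmajStep_Mpi_right_ends (j : ℕ) (hj : j ≤ m) :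
    (List.range' (m + 1 + j) (m - j)).foldr (fun i st => pmajStep (Mpi m π) st i) ([], 0) =
      ((List.ofFn (mpiArc π)).drop j,
        ∑ k ∈ Ico j m, desList ((List.ofFn fun i => (π i : ℕ) + 1).drop k)) := by
  obtain rfl | hlt := hj.eq_or_lt
  · simp
  have hsucc : List.range' (m + 1 + j) (m - j) =
      (m + 1 + j) :: List.range' (m + 1 + (j + 1)) (m - (j + 1)) := by
    rw [show m - j = m - (j + 1) + 1 by omega, List.range'_succ]
    rfl
  have hdrop : (List.ofFn (mpiArc π)).drop j =
      mpiArc π ⟨j, hlt⟩ :: (List.ofFn (mpiArc π)).drop (j + 1) := by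
    rw [List.drop_eq_getElem_cons (by simpa using hlt), List.getElem_ofFn]
  have hleft : ∀ f ∈ (List.ofFn (mpiArc π)).drop (j + 1), f.1 ≠ m + 1 + j := by
    intro f hf
    obtain ⟨i, rfl⟩ := List.mem_ofFn.1 (List.mem_of_mem_drop hf)
    simp only [mpiArc]
    omega
  rw [hsucc, List.foldr_cons, foldr_pmajStep_Mpi_right_ends (j + 1) hlt,
    pmajStep_of_filter_snd_eq_singleton _ (filter_Mpi_snd_eq π hlt) hleft, ← hdrop,
    List.map_drop, map_labelArc_ofFn_mpiArc, sum_eq_sum_Ico_succ_bot hlt, add_comm]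
termination_by m - j

end MatchingOfPerm

theorem pmaj_Mpi_eq_maj (m : ℕ) (π : Equiv.Perm (Fin m)) :
    pmajArcs (Mpi m π) = majPerm π := by
  have hsplit : List.range' 1 (m + m) = List.range' 1 m ++ List.range' (m + 1 + 0) (m - 0) := by
    rw [← List.range'_append]
    simp [add_comm]
  have hleft : ∀ i ∈ List.range' 1 m, ∀ e ∈ Mpi m π, e.2 ≠ i := fun i hi e he => by
    have := List.mem_range'_1.1 hi
    have := lt_snd_of_mem_Mpi π he
    omega
  rw [pmajArcs_eq_foldr, endpoints_Mpi, sort_Icc_one, hsplit, List.foldr_append,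
    foldr_pmajStep_Mpi_right_ends π 0 m.zero_le, foldr_pmajStep_snd_of_forall_snd_ne _ hleft,
    majPerm, ← sum_desList_drop, List.length_ofFn, range_eq_Ico]
end

section
/- Fix S, T ⊆ [n] with |S| = |T|. The set P_n(S,T) is in bijection with the set of bijections f from [n]\T to [n]\S satisfying i < f(i) for all i ∈ [n]\T (good matchings): a partition P corresponds to the map sending each left-hand endpoint of an arc of the standard representation of P to its right-hand endpoint. -/
open Finset
open scoped Classical

/-! The arcs of a partition `P` form the graph of a partial injection `arcMap P` from the
non-maxima to the non-minima that moves every point up, and `P` is recovered from its arcs by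
following them upwards; so `P ↦ arcMap P` is injective. Conversely a good matching `f` fixes `T`
and moves every other point of `[n]` up, so every orbit climbs into `T` within `n` steps and the
fibres of `f^[n]` partition `[n]`. As `f` is injective off its fixed points, two orbits that meet
are nested, hence consecutive elements of a fibre are exactly the pairs `(i, f i)`: the arcs of
this partition form the graph of `f`, and its minima and maxima are `S` and `T`. -/

namespace Function

variable {α : Type*} {f : α → α}

theorem exists_iterate_eq_or_of_iterate_eq (hf : Set.InjOn f {x | f x ≠ x}) :
    ∀ {a b : ℕ} {x y : α}, f^[a] x = f^[b] y → (∃ k, f^[k] x = y) ∨ ∃ k, f^[k] y = x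
  | 0, b, _, _, h => Or.inr ⟨b, h.symm⟩
  | a + 1, 0, _, _, h => Or.inl ⟨a + 1, h⟩
  | a + 1, b + 1, x, y, h => by
    rw [iterate_succ_apply', iterate_succ_apply'] at h
    by_cases hx : f (f^[a] x) = f^[a] x
    · exact exists_iterate_eq_or_of_iterate_eq hf (a := a) (b := b + 1)
        (by rw [iterate_succ_apply', ← h, hx])
    by_cases hy : f (f^[b] y) = f^[b] y
    · exact exists_iterate_eq_or_of_iterate_eq hf (a := a + 1) (b := b)
        (by rw [iterate_succ_apply', h, hy])
    exact exists_iterate_eq_or_of_iterate_eq hf (hf hx hy h)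

end Function

namespace Finpartition

variable {α : Type*} [DecidableEq α] {s : Finset α} (P : Finpartition s)

theorem exists_mem_parts_iff {a : α} {p : Finset α → Prop} :
    (∃ B ∈ P.parts, a ∈ B ∧ p B) ↔ a ∈ s ∧ p (P.part a) := by
  constructor
  · rintro ⟨B, hB, haB, hp⟩
    exact ⟨P.le hB haB, P.part_eq_of_mem hB haB ▸ hp⟩
  · rintro ⟨ha, hp⟩
    exact ⟨P.part a, P.part_mem.2 ha, P.mem_part ha, hp⟩

theorem mem_part_comm {a b : α} : a ∈ P.part b ↔ b ∈ P.part a := by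
  simp only [mem_part_iff_exists, and_comm]

theorem part_eq_of_mem_part {a b : α} (h : b ∈ P.part a) : P.part b = P.part a :=
  P.part_eq_of_mem (P.part_mem.2 (P.part_nonempty.1 ⟨b, h⟩)) h

end Finpartition

theorem mem_pnST {n : ℕ} {S T : Finset ℕ} {P : Finpartition (Icc 1 n)} :
    P ∈ pnST n S T ↔ minsetOf P = S ∧ maxsetOf P = T := by
  simp [pnST]

section Arcs

variable {n : ℕ} {P Q : Finpartition (Icc 1 n)} {i j : ℕ}

theorem mem_arcsOf_iff : (i, j) ∈ arcsOf P ↔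
    i ∈ Icc 1 n ∧ i < j ∧ j ∈ P.part i ∧ ∀ k ∈ P.part i, i < k → j ≤ k := by
  simp only [arcsOf, mem_filter, mem_product, P.exists_mem_parts_iff]
  constructor
  · rintro ⟨⟨hi, -⟩, hij, -, hj, hmin⟩
    exact ⟨hi, hij, hj, fun k hk hik => not_lt.1 (hmin k hk hik)⟩
  · rintro ⟨hi, hij, hj, hmin⟩
    exact ⟨⟨hi, P.part_subset i hj⟩, hij, hi, hj,
      fun k hk hik hkj => (hmin k hk hik).not_gt hkj⟩

theorem arcsOf_right_unique {j' : ℕ} (h : (i, j) ∈ arcsOf P) (h' : (i, j') ∈ arcsOf P) :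
    j = j' := by
  obtain ⟨-, hij, hj, hmin⟩ := mem_arcsOf_iff.1 h
  obtain ⟨-, hij', hj', hmin'⟩ := mem_arcsOf_iff.1 h'
  exact le_antisymm (hmin j' hj' hij') (hmin' j hj hij)

theorem arcsOf_left_unique {i' : ℕ} (h : (i, j) ∈ arcsOf P) (h' : (i', j) ∈ arcsOf P) :
    i = i' := by
  obtain ⟨-, hij, hj, hmin⟩ := mem_arcsOf_iff.1 h
  obtain ⟨-, hij', hj', hmin'⟩ := mem_arcsOf_iff.1 h'
  have hpart : P.part i' = P.part i := by
    rw [← P.part_eq_of_mem_part hj, P.part_eq_of_mem_part hj']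
  have hi' : i' ∈ P.part i := hpart ▸ P.mem_part (mem_arcsOf_iff.1 h').1
  have hi : i ∈ P.part i' := P.mem_part_comm.1 hi'
  by_contra hne
  rcases Nat.lt_or_gt_of_ne hne with hlt | hlt
  · exact (hmin i' hi' hlt).not_gt hij'
  · exact (hmin' i hi hlt).not_gt hij

theorem exists_arcsOf_fst_of_lt (hj : j ∈ P.part i) (hij : i < j) :
    ∃ k, (i, k) ∈ arcsOf P := by
  have hne : ((P.part i).filter (i < ·)).Nonempty := ⟨j, mem_filter.2 ⟨hj, hij⟩⟩
  obtain ⟨hk, hik⟩ := mem_filter.1 (min'_mem _ hne)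
  exact ⟨_, mem_arcsOf_iff.2 ⟨P.part_nonempty.1 ⟨j, hj⟩, hik, hk,
    fun k hk hik => min'_le _ _ (mem_filter.2 ⟨hk, hik⟩)⟩⟩

theorem exists_arcsOf_snd_of_lt (hj : j ∈ P.part i) (hij : i < j) :
    ∃ k, i ≤ k ∧ (k, j) ∈ arcsOf P := by
  have hi : i ∈ P.part i := P.mem_part (P.part_nonempty.1 ⟨j, hj⟩)
  have hne : ((P.part i).filter (· < j)).Nonempty := ⟨i, mem_filter.2 ⟨hi, hij⟩⟩
  obtain ⟨hk, hkj⟩ := mem_filter.1 (max'_mem _ hne)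
  have hpart := P.part_eq_of_mem_part hk
  refine ⟨_, le_max' _ _ (mem_filter.2 ⟨hi, hij⟩), mem_arcsOf_iff.2
    ⟨P.part_subset _ hk, hkj, by rwa [hpart], fun x hx hkx => ?_⟩⟩
  rw [hpart] at hx
  by_contra! hxj
  exact (le_max' _ x (mem_filter.2 ⟨hx, hxj⟩)).not_gt hkx

theorem mem_maxsetOf_iff : i ∈ maxsetOf P ↔ i ∈ Icc 1 n ∧ ¬∃ j, (i, j) ∈ arcsOf P := by
  simp only [maxsetOf, mem_filter, P.exists_mem_parts_iff, and_self_left, and_congr_right_iff]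
  intro hi
  constructor
  · rintro hmax ⟨j, hj⟩
    obtain ⟨-, hij, hj, -⟩ := mem_arcsOf_iff.1 hj
    exact (hmax j hj).not_gt hij
  · intro hno j hj
    by_contra! hij
    exact hno (exists_arcsOf_fst_of_lt hj hij)

theorem mem_minsetOf_iff : j ∈ minsetOf P ↔ j ∈ Icc 1 n ∧ ¬∃ i, (i, j) ∈ arcsOf P := by
  simp only [minsetOf, mem_filter, P.exists_mem_parts_iff, and_self_left, and_congr_right_iff]
  intro hj
  constructor
  · rintro hmin ⟨i, hi⟩
    obtain ⟨-, hij, hj, -⟩ := mem_arcsOf_iff.1 hi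
    exact (hmin i (P.mem_part_comm.1 hj)).not_gt hij
  · intro hno i hi
    by_contra! hij
    obtain ⟨k, -, hk⟩ := exists_arcsOf_snd_of_lt (P.mem_part_comm.1 hi) hij
    exact hno ⟨k, hk⟩

theorem part_subset_part_of_arcsOf_subset (h : arcsOf P ⊆ arcsOf Q) (i : ℕ) :
    P.part i ⊆ Q.part i := by
  suffices key : ∀ j, ∀ i ≤ j, j ∈ P.part i → j ∈ Q.part i by
    intro j hj
    rcases le_total i j with hij | hji
    · exact key j i hij hj
    · exact Q.mem_part_comm.1 (key i j hji (P.mem_part_comm.1 hj))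
  intro j
  induction j using Nat.strong_induction_on with
  | _ j ih =>
    intro i hij hj
    rcases hij.lt_or_eq with hij | rfl
    · obtain ⟨k, hik, hk⟩ := exists_arcsOf_snd_of_lt hj hij
      obtain ⟨-, hkj, hjk, -⟩ := mem_arcsOf_iff.1 hk
      have hkP : k ∈ P.part i := by
        rw [← P.part_eq_of_mem_part hj]
        exact P.mem_part_comm.1 hjk
      have hkQ := ih k hkj i hik hkP
      have hjQ := (mem_arcsOf_iff.1 (h hk)).2.2.1
      rwa [← Q.part_eq_of_mem_part hkQ]
    · exact Q.mem_part (P.part_subset _ hj)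

theorem le_of_arcsOf_subset (h : arcsOf P ⊆ arcsOf Q) : P ≤ Q := by
  intro B hB
  obtain ⟨i, hi⟩ := P.nonempty_of_mem_parts hB
  refine ⟨Q.part i, Q.part_mem.2 (P.le hB hi), ?_⟩
  rw [← P.part_eq_of_mem hB hi]
  exact part_subset_part_of_arcsOf_subset h i

theorem arcsOf_injective : Function.Injective (arcsOf (n := n)) := fun _ _ h =>
  le_antisymm (le_of_arcsOf_subset h.le) (le_of_arcsOf_subset h.ge)

end Arcs

noncomputable def arcMap {n : ℕ} (P : Finpartition (Icc 1 n)) (i : ℕ) : ℕ :=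
  if h : ∃ j, (i, j) ∈ arcsOf P then h.choose else i

def IsGoodMatching (n : ℕ) (S T : Finset ℕ) (f : ℕ → ℕ) : Prop :=
  Set.BijOn f ↑(Icc 1 n \ T) ↑(Icc 1 n \ S) ∧ (∀ i ∈ Icc 1 n \ T, i < f i) ∧
    ∀ i, i ∉ Icc 1 n \ T → f i = i

section ArcMap

variable {n : ℕ} {P : Finpartition (Icc 1 n)} {i j : ℕ}

theorem mem_arcsOf_iff_arcMap : (i, j) ∈ arcsOf P ↔ i < j ∧ arcMap P i = j := by
  constructor
  · intro h
    have hex : ∃ j, (i, j) ∈ arcsOf P := ⟨j, h⟩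
    rw [arcMap, dif_pos hex]
    exact ⟨(mem_arcsOf_iff.1 h).2.1, arcsOf_right_unique hex.choose_spec h⟩
  · rintro ⟨hij, rfl⟩
    unfold arcMap at hij ⊢
    split_ifs at hij ⊢ with hex
    · exact hex.choose_spec
    · exact absurd hij (lt_irrefl i)

theorem arcMap_injective : Function.Injective (arcMap (n := n)) := fun P Q h =>
  arcsOf_injective <| Finset.ext fun ⟨i, j⟩ => by
    rw [mem_arcsOf_iff_arcMap, mem_arcsOf_iff_arcMap, h]

theorem exists_arcsOf_fst_iff : (∃ j, (i, j) ∈ arcsOf P) ↔ i ∈ Icc 1 n \ maxsetOf P := by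
  rw [mem_sdiff, mem_maxsetOf_iff]
  exact ⟨fun ⟨j, h⟩ => ⟨(mem_arcsOf_iff.1 h).1, fun h' => h'.2 ⟨j, h⟩⟩,
    fun ⟨hi, h⟩ => not_not.1 fun h' => h ⟨hi, h'⟩⟩

theorem exists_arcsOf_snd_iff : (∃ i, (i, j) ∈ arcsOf P) ↔ j ∈ Icc 1 n \ minsetOf P := by
  rw [mem_sdiff, mem_minsetOf_iff]
  exact ⟨fun ⟨i, h⟩ =>
      ⟨P.part_subset i (mem_arcsOf_iff.1 h).2.2.1, fun h' => h'.2 ⟨i, h⟩⟩,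
    fun ⟨hj, h⟩ => not_not.1 fun h' => h ⟨hj, h'⟩⟩

theorem arcMap_mem_arcsOf (hi : i ∈ Icc 1 n \ maxsetOf P) : (i, arcMap P i) ∈ arcsOf P := by
  obtain ⟨j, h⟩ := exists_arcsOf_fst_iff.2 hi
  rwa [(mem_arcsOf_iff_arcMap.1 h).2]

theorem arcMap_eq_self (hi : i ∉ Icc 1 n \ maxsetOf P) : arcMap P i = i :=
  dif_neg (mt exists_arcsOf_fst_iff.1 hi)

theorem isGoodMatching_arcMap : IsGoodMatching n (minsetOf P) (maxsetOf P) (arcMap P) := by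
  refine ⟨⟨fun i hi => ?_, fun x hx y hy hxy => ?_, fun j hj => ?_⟩,
    fun i hi => (mem_arcsOf_iff_arcMap.1 (arcMap_mem_arcsOf hi)).1, fun i => arcMap_eq_self⟩
  · exact exists_arcsOf_snd_iff.1 ⟨i, arcMap_mem_arcsOf hi⟩
  · exact arcsOf_left_unique (arcMap_mem_arcsOf hx) (hxy ▸ arcMap_mem_arcsOf hy)
  · obtain ⟨i, h⟩ := exists_arcsOf_snd_iff.2 hj
    exact ⟨i, exists_arcsOf_fst_iff.1 ⟨j, h⟩, (mem_arcsOf_iff_arcMap.1 h).2⟩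

end ArcMap

namespace IsGoodMatching

variable {n : ℕ} {S T : Finset ℕ} {f : ℕ → ℕ} {i : ℕ}

theorem apply_eq_self_of_mem (hf : IsGoodMatching n S T f) {t : ℕ} (ht : t ∈ T) : f t = t :=
  hf.2.2 t fun h => (mem_sdiff.1 h).2 ht

theorem le_iterate (hf : IsGoodMatching n S T f) (k i : ℕ) : i ≤ f^[k] i := by
  refine Function.id_le_iterate_of_id_le (fun i => ?_) k i
  by_cases hi : i ∈ Icc 1 n \ T
  · exact (hf.2.1 i hi).le
  · exact (hf.2.2 i hi).ge

theorem mapsTo_Icc (hf : IsGoodMatching n S T f) :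
    Set.MapsTo f ↑(Icc 1 n) ↑(Icc 1 n) := fun i hi => by
  by_cases hiT : i ∈ Icc 1 n \ T
  · exact mem_coe.2 (mem_sdiff.1 (hf.1.mapsTo hiT)).1
  · rwa [hf.2.2 i hiT]

theorem injOn_nonfixed (hf : IsGoodMatching n S T f) : Set.InjOn f {x | f x ≠ x} :=
  fun x hx y hy => hf.1.injOn (not_not.1 (mt (hf.2.2 x) hx)) (not_not.1 (mt (hf.2.2 y) hy))

theorem iterate_mem (hf : IsGoodMatching n S T f) (hi : i ∈ Icc 1 n) : f^[n] i ∈ T := by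
  have key : ∀ m, f^[m] i ∈ T ∨ i + m ≤ f^[m] i := by
    intro m
    induction m with
    | zero => simp
    | succ m ih =>
      rw [Function.iterate_succ_apply']
      by_cases hT : f^[m] i ∈ T
      · exact .inl (by rwa [hf.apply_eq_self_of_mem hT])
      · have hm : f^[m] i ∈ Icc 1 n \ T := mem_sdiff.2 ⟨hf.mapsTo_Icc.iterate m hi, hT⟩
        have := hf.2.1 _ hm
        have := ih.resolve_left hT
        omega
  have hn := mem_Icc.1 (hf.mapsTo_Icc.iterate n hi)
  have := mem_Icc.1 hi
  exact (key n).resolve_right (by omega)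

theorem iterate_apply (hf : IsGoodMatching n S T f) (hi : i ∈ Icc 1 n) :
    f^[n] (f i) = f^[n] i := by
  rw [← Function.iterate_succ_apply, Function.iterate_succ_apply',
    hf.apply_eq_self_of_mem (hf.iterate_mem hi)]

end IsGoodMatching

noncomputable def partitionOfMatching (n : ℕ) (f : ℕ → ℕ) : Finpartition (Icc 1 n) :=
  Finpartition.ofSetSetoid (Setoid.ker f^[n]) (Icc 1 n)

section PartitionOfMatching

variable {n : ℕ} {S T : Finset ℕ} {f : ℕ → ℕ} {i j : ℕ}

theorem mem_part_partitionOfMatching :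
    j ∈ (partitionOfMatching n f).part i ↔
      i ∈ Icc 1 n ∧ j ∈ Icc 1 n ∧ f^[n] i = f^[n] j :=
  Finpartition.mem_part_ofSetSetoid_iff_rel _

theorem apply_mem_arcsOf_partitionOfMatching (hf : IsGoodMatching n S T f)
    (hi : i ∈ Icc 1 n \ T) : (i, f i) ∈ arcsOf (partitionOfMatching n f) := by
  have hiI := (mem_sdiff.1 hi).1
  have hlt := hf.2.1 i hi
  refine mem_arcsOf_iff.2 ⟨hiI, hlt, mem_part_partitionOfMatching.2
    ⟨hiI, hf.mapsTo_Icc hiI, (hf.iterate_apply hiI).symm⟩, fun k hk hik => ?_⟩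
  obtain ⟨-, -, hik'⟩ := mem_part_partitionOfMatching.1 hk
  rcases Function.exists_iterate_eq_or_of_iterate_eq hf.injOn_nonfixed hik' with
    ⟨_ | m, hm⟩ | ⟨m, hm⟩
  · exact absurd hm hik.ne
  · exact hm ▸ hf.le_iterate m (f i)
  · exact absurd (hm ▸ hf.le_iterate m k) hik.not_ge

theorem mem_arcsOf_partitionOfMatching (hf : IsGoodMatching n S T f) :
    (i, j) ∈ arcsOf (partitionOfMatching n f) ↔ i ∈ Icc 1 n \ T ∧ f i = j := by
  refine ⟨fun h => ?_, fun ⟨hi, hij⟩ => hij ▸ apply_mem_arcsOf_partitionOfMatching hf hi⟩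
  obtain ⟨hiI, hij, hj, -⟩ := mem_arcsOf_iff.1 h
  have hiT : i ∉ T := fun hiT => by
    obtain ⟨-, -, htop⟩ := mem_part_partitionOfMatching.1 hj
    rw [Function.iterate_fixed (hf.apply_eq_self_of_mem hiT)] at htop
    exact (htop ▸ hf.le_iterate n j).not_gt hij
  have hi : i ∈ Icc 1 n \ T := mem_sdiff.2 ⟨hiI, hiT⟩
  exact ⟨hi, arcsOf_right_unique (apply_mem_arcsOf_partitionOfMatching hf hi) h⟩

theorem arcMap_partitionOfMatching (hf : IsGoodMatching n S T f) :
    arcMap (partitionOfMatching n f) = f := by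
  funext i
  by_cases hi : i ∈ Icc 1 n \ T
  · exact (mem_arcsOf_iff_arcMap.1 (apply_mem_arcsOf_partitionOfMatching hf hi)).2
  · rw [hf.2.2 i hi]
    exact dif_neg fun ⟨j, h⟩ => hi ((mem_arcsOf_partitionOfMatching hf).1 h).1

theorem partitionOfMatching_mem_pnST (hS : S ⊆ Icc 1 n) (hT : T ⊆ Icc 1 n)
    (hf : IsGoodMatching n S T f) : partitionOfMatching n f ∈ pnST n S T := by
  refine mem_pnST.2 ⟨?_, ?_⟩
  · ext j
    have hrange : (∃ i, i ∈ Icc 1 n \ T ∧ f i = j) ↔ j ∈ Icc 1 n \ S := by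
      rw [← mem_coe (s := Icc 1 n \ S), ← hf.1.image_eq]; rfl
    simp only [mem_minsetOf_iff, mem_arcsOf_partitionOfMatching hf]
    rw [hrange, mem_sdiff]
    have := @hS j
    tauto
  · ext i
    simp only [mem_maxsetOf_iff, mem_arcsOf_partitionOfMatching hf, exists_and_left, exists_eq',
      and_true, mem_sdiff]
    have := @hT i
    tauto

end PartitionOfMatching

theorem pnST_bij_good_matchings_general (n : ℕ) (S T : Finset ℕ)
    (hS : S ⊆ Finset.Icc 1 n) (hT : T ⊆ Finset.Icc 1 n) :
    ∃ e : {P // P ∈ pnST n S T} ≃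
        {f : ℕ → ℕ //
          Set.BijOn f (↑(Finset.Icc 1 n \ T) : Set ℕ) (↑(Finset.Icc 1 n \ S) : Set ℕ) ∧
          (∀ i ∈ Finset.Icc 1 n \ T, i < f i) ∧
          (∀ i, i ∉ Finset.Icc 1 n \ T → f i = i)},
      ∀ P : {P // P ∈ pnST n S T},
        ∀ i ∈ Finset.Icc 1 n \ T, (i, (e P).val i) ∈ arcsOf P.val := by
  have hgood {P : Finpartition (Icc 1 n)} (hP : P ∈ pnST n S T) :
      IsGoodMatching n S T (arcMap P) := by
    obtain ⟨rfl, rfl⟩ := mem_pnST.1 hP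
    exact isGoodMatching_arcMap
  refine ⟨Equiv.ofBijective (fun P => ⟨arcMap P.1, hgood P.2⟩) ⟨?_, ?_⟩, ?_⟩
  · exact fun P Q h => Subtype.ext (arcMap_injective (congrArg Subtype.val h))
  · exact fun f => ⟨⟨_, partitionOfMatching_mem_pnST hS hT f.2⟩,
      Subtype.ext (arcMap_partitionOfMatching f.2)⟩
  · intro P i hi
    rw [← (mem_pnST.1 P.2).2] at hi
    exact arcMap_mem_arcsOf hi

theorem pnST_bij_good_matchings (n : ℕ) (S T : Finset ℕ)
    (hS : S ⊆ Finset.Icc 1 n) (hT : T ⊆ Finset.Icc 1 n) (hcard : S.card = T.card) :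
    ∃ e : {P // P ∈ pnST n S T} ≃
        {f : ℕ → ℕ //
          Set.BijOn f (↑(Finset.Icc 1 n \ T) : Set ℕ) (↑(Finset.Icc 1 n \ S) : Set ℕ) ∧
          (∀ i ∈ Finset.Icc 1 n \ T, i < f i) ∧
          (∀ i, i ∉ Finset.Icc 1 n \ T → f i = i)},
      ∀ P : {P // P ∈ pnST n S T},
        ∀ i ∈ Finset.Icc 1 n \ T, (i, (e P).val i) ∈ arcsOf P.val :=
  pnST_bij_good_matchings_general n S T hS hT
end
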